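/- arXiv:2510.25462 — 4 statements merged into one kernel-verified Lean document; each statement's English description precedes it below -/
import Mathlib

section
/- The functional Ψ(q) = ∫₀ᵀ (1 - √(1 - |q̇(t)|²)) dt, defined on K = {q T-periodic Lipschitz : ‖q̇‖_∞ ≤ 1} and extended by +∞ outside K, is convex and lower semicontinuous on the space of T-periodic Lipschitz functions with respect to the L^∞ norm. -/
open MeasureTheory intervalIntegral Filter Function Set

local notation "E3" => EuclideanSpace ℝ (Fin 3)

noncomputable def phi (v : EuclideanSpace ℝ (Fin 3)) : ℝ := 1 - Real.sqrt (1 - ‖v‖ ^ 2)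

lemma phi_nonneg (v : E3) : 0 ≤ phi v := by
  have : Real.sqrt (1 - ‖v‖ ^ 2) ≤ 1 := by
    calc Real.sqrt (1 - ‖v‖ ^ 2) ≤ Real.sqrt 1 := by
          apply Real.sqrt_le_sqrt; nlinarith [sq_nonneg ‖v‖]
      _ = 1 := Real.sqrt_one
  simp only [phi]; linarith

lemma phi_le_one (v : E3) : phi v ≤ 1 := by
  have : 0 ≤ Real.sqrt (1 - ‖v‖ ^ 2) := Real.sqrt_nonneg _
  simp only [phi]; linarith

lemma phi_abs_le_one (v : E3) : ‖phi v‖ ≤ 1 := by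
  rw [Real.norm_eq_abs, abs_le]; exact ⟨by linarith [phi_nonneg v], phi_le_one v⟩

lemma phi_continuous : Continuous phi := by
  unfold phi
  fun_prop

lemma phi_comb {v w : E3} (hv : ‖v‖ ≤ 1) (hw : ‖w‖ ≤ 1) {a b : ℝ}
    (ha : 0 ≤ a) (hb : 0 ≤ b) (hab : a + b = 1) :
    phi (a • v + b • w) ≤ a * phi v + b * phi w := by
  set s := ‖v‖ with hs
  set u := ‖w‖ with hu
  have hs0 : 0 ≤ s := norm_nonneg v
  have hu0 : 0 ≤ u := norm_nonneg w
  set α := Real.sqrt (1 - s ^ 2) with hα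
  set β := Real.sqrt (1 - u ^ 2) with hβ
  have hα0 : 0 ≤ α := Real.sqrt_nonneg _
  have hβ0 : 0 ≤ β := Real.sqrt_nonneg _
  have hα2 : α ^ 2 = 1 - s ^ 2 := Real.sq_sqrt (by nlinarith)
  have hβ2 : β ^ 2 = 1 - u ^ 2 := Real.sq_sqrt (by nlinarith)
  have htri : ‖a • v + b • w‖ ≤ a * s + b * u := by
    calc ‖a • v + b • w‖ ≤ ‖a • v‖ + ‖b • w‖ := norm_add_le _ _
      _ = a * s + b * u := by rw [norm_smul, norm_smul]; simp [abs_of_nonneg ha, abs_of_nonneg hb]; rfl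
  have hn0 : 0 ≤ ‖a • v + b • w‖ := norm_nonneg _
  have key : a * α + b * β ≤ Real.sqrt (1 - ‖a • v + b • w‖ ^ 2) := by
    have h1 : s * u + α * β ≤ 1 := by
      nlinarith [sq_nonneg (s * β - u * α), mul_nonneg (mul_nonneg hs0 hu0) (mul_nonneg hα0 hβ0)]
    have h2 : ‖a • v + b • w‖ ^ 2 ≤ (a * s + b * u) ^ 2 := by nlinarith
    have h3 : (a * α + b * β) ^ 2 + (a * s + b * u) ^ 2 ≤ 1 := by
      have e : (a * α + b * β) ^ 2 + (a * s + b * u) ^ 2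
          = a ^ 2 * (α ^ 2 + s ^ 2) + b ^ 2 * (β ^ 2 + u ^ 2) + 2 * a * b * (α * β + s * u) := by
        ring
      have e1 : α ^ 2 + s ^ 2 = 1 := by linarith
      have e2 : β ^ 2 + u ^ 2 = 1 := by linarith
      rw [e, e1, e2]
      have := mul_le_mul_of_nonneg_left h1 (by positivity : (0:ℝ) ≤ 2 * a * b)
      nlinarith [this]
    rw [Real.le_sqrt (by positivity) (by nlinarith [sq_nonneg (a * α + b * β)])]
    linarith
  simp only [phi]
  nlinarith [key]

lemma phi_convexOn : ConvexOn ℝ (Metric.closedBall (0 : E3) 1) phi := by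
  refine ⟨convex_closedBall _ _, fun v hv w hw a b ha hb hab => ?_⟩
  rw [Metric.mem_closedBall, dist_zero_right] at hv hw
  exact phi_comb hv hw ha hb hab

lemma phi_deriv_meas (f : ℝ → E3) : Measurable fun t => phi (deriv f t) :=
  phi_continuous.measurable.comp (measurable_deriv f)

lemma phi_deriv_intable (f : ℝ → E3) (a b : ℝ) :
    IntervalIntegrable (fun t => phi (deriv f t)) volume a b := by
  exact (_root_.intervalIntegrable_const (c := (1:ℝ))).mono_fun
    (phi_deriv_meas f).aestronglyMeasurable
    (Filter.Eventually.of_forall fun t => by simpa using phi_abs_le_one (deriv f t))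

lemma norm_deriv_le_one {f : ℝ → E3} (hf : LipschitzWith 1 f) (t : ℝ) : ‖deriv f t‖ ≤ 1 := by
  by_cases h : DifferentiableAt ℝ f t
  · have := (h.hasFDerivAt).le_of_lipschitz hf
    calc ‖deriv f t‖ = ‖(fderiv ℝ f t) 1‖ := by
          rw [← fderiv_apply_one_eq_deriv]
      _ ≤ ‖fderiv ℝ f t‖ * ‖(1:ℝ)‖ := (fderiv ℝ f t).le_opNorm 1
      _ ≤ 1 := by simpa using this
  · simp [deriv_zero_of_not_differentiableAt h]

lemma hseq_tendsto : Tendsto (fun k : ℕ => (1:ℝ)/(k+1)) atTop (nhdsWithin 0 {0}ᶜ) := by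
  rw [tendsto_nhdsWithin_iff]
  refine ⟨tendsto_one_div_add_atTop_nhds_zero_nat, Eventually.of_forall fun k => ?_⟩
  simp only [Set.mem_compl_iff, Set.mem_singleton_iff]
  positivity

lemma slope_tendsto {f : ℝ → E3} {t : ℝ} (h : DifferentiableAt ℝ f t) :
    Tendsto (fun k : ℕ => ((1:ℝ)/(k+1))⁻¹ • (f (t + 1/(k+1)) - f t)) atTop
      (nhds (deriv f t)) :=
  (h.hasDerivAt.tendsto_slope_zero).comp hseq_tendsto

lemma norm_deriv_le {L : NNReal} {f : ℝ → E3} (hf : LipschitzWith L f) (t : ℝ) :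
    ‖deriv f t‖ ≤ L := by
  by_cases h : DifferentiableAt ℝ f t
  · have h2 := (h.hasFDerivAt).le_of_lipschitz hf
    calc ‖deriv f t‖ = ‖(fderiv ℝ f t) 1‖ := by rw [← fderiv_apply_one_eq_deriv]
      _ ≤ ‖fderiv ℝ f t‖ * ‖(1:ℝ)‖ := (fderiv ℝ f t).le_opNorm 1
      _ ≤ L := by simpa using h2
  · simp [deriv_zero_of_not_differentiableAt h]

lemma deriv_intable {L : NNReal} {f : ℝ → E3} (hf : LipschitzWith L f) (a b : ℝ) :
    IntervalIntegrable (deriv f) volume a b :=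
  (_root_.intervalIntegrable_const (c := (L:ℝ))).mono_fun
    (measurable_deriv f).aestronglyMeasurable
    (Eventually.of_forall fun t => by simpa using norm_deriv_le hf t)

lemma lip_ftc {L : NNReal} {f : ℝ → E3} (hf : LipschitzWith L f) (a b : ℝ) :
    ∫ t in a..b, deriv f t = f b - f a := by
  set h : ℕ → ℝ := fun k => (1:ℝ)/(k+1) with hh
  have hpos : ∀ k, 0 < h k := fun k => by positivity
  have hcont : Continuous f := hf.continuous
  have hfi : ∀ c d : ℝ, IntervalIntegrable f volume c d := fun c d =>
    hcont.intervalIntegrable c d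
  -- the difference quotient integrals
  have key1 : Tendsto (fun k => ∫ t in a..b, (h k)⁻¹ • (f (t + h k) - f t)) atTop
      (nhds (∫ t in a..b, deriv f t)) := by
    apply intervalIntegral.tendsto_integral_filter_of_dominated_convergence
      (bound := fun _ => (L:ℝ))
    · exact Eventually.of_forall fun k =>
        (by fun_prop : Continuous fun t => (h k)⁻¹ • (f (t + h k) - f t)).aestronglyMeasurable
    · refine Eventually.of_forall fun k => Eventually.of_forall fun t => fun _ => ?_
      rw [norm_smul, norm_inv, Real.norm_eq_abs, abs_of_pos (hpos k)]
      have hb : ‖f (t + h k) - f t‖ ≤ L * h k := by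
        have := hf.dist_le_mul (t + h k) t
        rw [dist_eq_norm] at this
        simpa [abs_of_pos (hpos k)] using this
      rw [inv_mul_le_iff₀ (hpos k)]
      calc ‖f (t + h k) - f t‖ ≤ L * h k := hb
        _ = h k * L := mul_comm _ _
    · exact _root_.intervalIntegrable_const
    · exact ((hf.ae_differentiableAt (μ := volume)).mono fun t ht _ => slope_tendsto ht)
  have key2 : Tendsto (fun k => ∫ t in a..b, (h k)⁻¹ • (f (t + h k) - f t)) atTop
      (nhds (f b - f a)) := by
    have hasd : ∀ c : ℝ, Tendsto (fun k => (h k)⁻¹ • ((∫ t in a..c + h k, f t) - ∫ t in a..c, f t))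
        atTop (nhds (f c)) := by
      intro c
      have H : HasDerivAt (fun x => ∫ t in a..x, f t) (f c) c :=
        intervalIntegral.integral_hasDerivAt_right (hfi a c)
          (hcont.stronglyMeasurableAtFilter _ _) hcont.continuousAt
      exact H.tendsto_slope_zero.comp hseq_tendsto
    have heq : ∀ k, ∫ t in a..b, (h k)⁻¹ • (f (t + h k) - f t)
        = (h k)⁻¹ • ((∫ t in a..b + h k, f t) - ∫ t in a..b, f t)
          - (h k)⁻¹ • ((∫ t in a..a + h k, f t) - ∫ t in a..a, f t) := by
      intro k
      have e1 : ∫ t in a..b, (h k)⁻¹ • (f (t + h k) - f t)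
          = (h k)⁻¹ • ((∫ t in a..b, f (t + h k)) - ∫ t in a..b, f t) := by
        rw [← intervalIntegral.integral_sub
          ((by fun_prop : Continuous fun t : ℝ => f (t + h k)).intervalIntegrable a b) (hfi a b),
          ← intervalIntegral.integral_smul]
      rw [e1, intervalIntegral.integral_comp_add_right, intervalIntegral.integral_same, sub_zero,
        ← smul_sub]
      congr 1
      have c1 : (∫ t in a..a + h k, f t) + ∫ t in a + h k..b + h k, f t = ∫ t in a..b + h k, f t :=
        intervalIntegral.integral_add_adjacent_intervals (hfi _ _) (hfi _ _)
      rw [← c1]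
      abel
    simp only [heq]
    simpa using (hasd b).sub (hasd a)
  exact tendsto_nhds_unique key1 key2


lemma jensen_step {f : ℝ → E3} (hf : LipschitzWith 1 f) {h : ℝ} (hh : 0 < h) (t : ℝ) :
    phi (h⁻¹ • (f (t + h) - f t)) ≤ h⁻¹ * ∫ s in t..(t + h), phi (deriv f s) := by
  set μ := volume.restrict (Ioc t (t + h)) with hμ
  have hμuniv : μ univ = ENNReal.ofReal h := by
    rw [hμ, Measure.restrict_apply_univ, Real.volume_Ioc]
    congr 1; ring
  haveI : NeZero μ := ⟨by
    rw [← Measure.measure_univ_ne_zero, hμuniv]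
    simp [ENNReal.ofReal_eq_zero, not_le, hh]⟩
  have hfi : Integrable (deriv f) μ := by
    refine (integrable_const (1:ℝ)).mono' ((measurable_deriv f).aestronglyMeasurable) ?_
    exact Eventually.of_forall fun s => by simpa using norm_deriv_le hf s
  have hgi : Integrable (phi ∘ deriv f) μ := by
    refine (integrable_const (1:ℝ)).mono'
      ((phi_continuous.measurable.comp (measurable_deriv f)).aestronglyMeasurable) ?_
    exact Eventually.of_forall fun s => phi_abs_le_one _
  have hfs : ∀ᵐ x ∂μ, deriv f x ∈ Metric.closedBall (0 : E3) 1 :=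
    Eventually.of_forall fun s => by
      rw [Metric.mem_closedBall, dist_zero_right]; simpa using norm_deriv_le hf s
  have jensen := phi_convexOn.map_average_le phi_continuous.continuousOn
    Metric.isClosed_closedBall hfs hfi hgi
  have havg1 : ⨍ x, deriv f x ∂μ = h⁻¹ • (f (t + h) - f t) := by
    rw [average_eq, measureReal_def, hμuniv, ENNReal.toReal_ofReal hh.le]
    congr 1
    have := lip_ftc hf t (t + h)
    rw [intervalIntegral.integral_of_le (by linarith)] at this
    rw [hμ]; exact this
  have havg2 : ⨍ x, phi (deriv f x) ∂μ = h⁻¹ * ∫ s in t..(t + h), phi (deriv f s) := by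
    rw [average_eq, measureReal_def, hμuniv, ENNReal.toReal_ofReal hh.le,
      intervalIntegral.integral_of_le (by linarith : t ≤ t + h)]
    simp [hμ, smul_eq_mul]
  rw [havg1, havg2] at jensen
  exact jensen

lemma periodic_deriv {T : ℝ} {f : ℝ → E3} (hp : Function.Periodic f T) :
    Function.Periodic (deriv f) T := by
  intro x
  have hfe : (fun y => f (y + T)) = f := funext hp
  rw [← deriv_comp_add_const, hfe]

lemma chain {T : ℝ} (hT : 0 < T) {f : ℝ → E3} (hf : LipschitzWith 1 f)
    (hper : Function.Periodic f T) {h : ℝ} (hh : 0 < h) :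
    ∫ t in (0:ℝ)..T, phi (h⁻¹ • (f (t + h) - f t)) ≤ ∫ t in (0:ℝ)..T, phi (deriv f t) := by
  set g : ℝ → ℝ := fun s => phi (deriv f s) with hg
  have hgmeas : Measurable g := phi_deriv_meas f
  have hgint : ∀ a b : ℝ, IntervalIntegrable g volume a b := phi_deriv_intable f
  have hgper : Function.Periodic g T := fun x => by simp [hg, periodic_deriv hper x]
  -- the function t ↦ ∫_t^{t+h} g
  set F : ℝ → ℝ := fun x => ∫ s in (0:ℝ)..x, g s with hF
  have hFc : Continuous F := intervalIntegral.continuous_primitive hgint 0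
  have hFd : ∀ t : ℝ, (∫ s in t..(t + h), g s) = F (t + h) - F t := by
    intro t
    have c1 : (∫ s in (0:ℝ)..t, g s) + ∫ s in t..(t + h), g s = ∫ s in (0:ℝ)..(t + h), g s :=
      intervalIntegral.integral_add_adjacent_intervals (hgint _ _) (hgint _ _)
    rw [hF]; dsimp only; linarith
  have step1 : ∫ t in (0:ℝ)..T, phi (h⁻¹ • (f (t + h) - f t))
      ≤ ∫ t in (0:ℝ)..T, h⁻¹ * ∫ s in t..(t + h), g s := by
    apply intervalIntegral.integral_mono_on hT.le
    · exact (phi_continuous.comp (by have := hf.continuous; fun_prop :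
        Continuous fun t => h⁻¹ • (f (t + h) - f t))).intervalIntegrable _ _
    · have : Continuous fun t => h⁻¹ * ∫ s in t..(t + h), g s := by
        simp only [hFd]
        exact continuous_const.mul ((hFc.comp (continuous_id.add continuous_const)).sub hFc)
      exact this.intervalIntegrable _ _
    · exact fun x _ => jensen_step hf hh x
  -- compute the middle integral
  have swap : ∫ t in (0:ℝ)..T, (∫ s in t..(t + h), g s) = h * ∫ t in (0:ℝ)..T, g t := by
    have inner : ∀ t : ℝ, (∫ s in t..(t + h), g s) = ∫ s in (0:ℝ)..h, g (t + s) := by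
      intro t
      rw [intervalIntegral.integral_comp_add_left g]
      norm_num
    simp only [inner]
    have W_meas : Measurable (uncurry fun t s : ℝ => g (t + s)) :=
      hgmeas.comp (measurable_fst.add measurable_snd)
    have W_int : Integrable (uncurry fun t s : ℝ => g (t + s))
        ((volume.restrict (Ioc (0:ℝ) T)).prod (volume.restrict (Ioc (0:ℝ) h))) := by
      refine (integrable_const (1:ℝ)).mono' W_meas.aestronglyMeasurable ?_
      exact Eventually.of_forall fun p => by simpa [hg, Function.uncurry] using phi_abs_le_one (deriv f (p.1 + p.2))
    have tr : ∀ s : ℝ, (∫ t in (0:ℝ)..T, g (t + s)) = ∫ t in (0:ℝ)..T, g t := by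
      intro s
      rw [intervalIntegral.integral_comp_add_right g s]
      have := hgper.intervalIntegral_add_eq s 0
      rw [zero_add] at this
      rw [show (0:ℝ) + s = s by ring, show T + s = s + T by ring]
      exact this
    calc ∫ t in (0:ℝ)..T, (∫ s in (0:ℝ)..h, g (t + s))
        = ∫ t in Ioc (0:ℝ) T, (∫ s in Ioc (0:ℝ) h, g (t + s)) := by
          rw [intervalIntegral.integral_of_le hT.le]
          congr 1; funext t; rw [intervalIntegral.integral_of_le hh.le]
      _ = ∫ s in Ioc (0:ℝ) h, (∫ t in Ioc (0:ℝ) T, g (t + s)) :=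
          MeasureTheory.integral_integral_swap W_int
      _ = ∫ s in Ioc (0:ℝ) h, (∫ t in (0:ℝ)..T, g t) := by
          congr 1; funext s
          rw [← intervalIntegral.integral_of_le hT.le, tr s]
      _ = h * ∫ t in (0:ℝ)..T, g t := by
          rw [setIntegral_const, measureReal_def, Real.volume_Ioc, smul_eq_mul,
            ENNReal.toReal_ofReal (by linarith)]
          norm_num
  calc ∫ t in (0:ℝ)..T, phi (h⁻¹ • (f (t + h) - f t))
      ≤ ∫ t in (0:ℝ)..T, h⁻¹ * ∫ s in t..(t + h), g s := step1
    _ = h⁻¹ * ∫ t in (0:ℝ)..T, (∫ s in t..(t + h), g s) := intervalIntegral.integral_const_mul _ _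
    _ = h⁻¹ * (h * ∫ t in (0:ℝ)..T, g t) := by rw [swap]
    _ = ∫ t in (0:ℝ)..T, g t := by field_simp

lemma tendsto_diffq {T : ℝ} {f : ℝ → E3} {L : NNReal} (hf : LipschitzWith L f) :
    Tendsto (fun k : ℕ => ∫ t in (0:ℝ)..T, phi (((1:ℝ)/(k+1))⁻¹ • (f (t + 1/(k+1)) - f t)))
      atTop (nhds (∫ t in (0:ℝ)..T, phi (deriv f t))) := by
  apply intervalIntegral.tendsto_integral_filter_of_dominated_convergence
    (bound := fun _ => (1:ℝ))
  · refine Eventually.of_forall fun k => Continuous.aestronglyMeasurable ?_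
    exact phi_continuous.comp (by have := hf.continuous; fun_prop :
      Continuous fun t => ((1:ℝ)/(k+1))⁻¹ • (f (t + 1/(k+1)) - f t))
  · exact Eventually.of_forall fun k => Eventually.of_forall fun t _ => phi_abs_le_one _
  · exact _root_.intervalIntegrable_const
  · exact (hf.ae_differentiableAt (μ := volume)).mono fun t ht _ =>
      (phi_continuous.continuousAt).tendsto.comp (slope_tendsto ht)

lemma lip_limit {q : ℝ → E3} {qn : ℕ → ℝ → E3}
    (hunif : TendstoUniformly qn q atTop)
    (hfreq : ∃ᶠ n in atTop, LipschitzWith 1 (qn n)) : LipschitzWith 1 q := by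
  rw [lipschitzWith_iff_dist_le_mul]
  intro x y
  rw [NNReal.coe_one, one_mul]
  refine le_of_forall_pos_le_add fun ε hε => ?_
  have hev : ∀ᶠ n in atTop, ∀ t : ℝ, dist (q t) (qn n t) < ε / 2 :=
    (Metric.tendstoUniformly_iff.mp hunif (ε / 2) (by linarith)).mono fun n hn t => hn t
  obtain ⟨n, hn1, hn2⟩ := (hfreq.and_eventually hev).exists
  have h1 := hn1.dist_le_mul x y
  rw [NNReal.coe_one, one_mul] at h1
  calc dist (q x) (q y) ≤ dist (q x) (qn n x) + dist (qn n x) (qn n y) + dist (qn n y) (q y) :=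
        dist_triangle4 _ _ _ _
    _ ≤ ε / 2 + dist x y + ε / 2 := by
        have := hn2 x
        have := hn2 y
        rw [dist_comm (qn n y) (q y)]
        linarith
    _ = dist x y + ε := by ring

open Classical in
/-- The relativistic kinetic functional `Ψ(q) = ∫₀ᵀ (1 - √(1 - |q̇|²)) dt` on
`K = {q T-periodic Lipschitz : ‖q̇‖_∞ ≤ 1}`, extended by `+∞` outside `K`. -/
noncomputable def Psi (T : ℝ) (q : ℝ → EuclideanSpace ℝ (Fin 3)) : EReal :=
  if LipschitzWith 1 q then
    ((∫ t in (0:ℝ)..T, (1 - Real.sqrt (1 - ‖deriv q t‖ ^ 2)) : ℝ) : EReal)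
  else ⊤

lemma Psi_eq {T : ℝ} {q : ℝ → E3} (h : LipschitzWith 1 q) :
    Psi T q = ((∫ t in (0:ℝ)..T, phi (deriv q t) : ℝ) : EReal) := by
  rw [Psi, if_pos h]; rfl

lemma Psi_ne_bot (T : ℝ) (q : ℝ → E3) : Psi T q ≠ ⊥ := by
  rw [Psi]; split
  · exact EReal.coe_ne_bot _
  · exact bot_lt_top.ne'

lemma Psi_nonneg {T : ℝ} (hT : 0 ≤ T) (q : ℝ → E3) : 0 ≤ Psi T q := by
  rw [Psi]; split
  · rw [← EReal.coe_zero, EReal.coe_le_coe_iff]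
    exact intervalIntegral.integral_nonneg hT fun t _ => phi_nonneg (deriv q t)
  · exact le_top

lemma comb_lip {p q : ℝ → E3} (hp : LipschitzWith 1 p) (hq : LipschitzWith 1 q)
    {a b : ℝ} (ha : 0 ≤ a) (hb : 0 ≤ b) (hab : a + b = 1) :
    LipschitzWith 1 (fun t => a • p t + b • q t) := by
  rw [lipschitzWith_iff_dist_le_mul]
  intro x y
  have h1 := hp.dist_le_mul x y
  have h2 := hq.dist_le_mul x y
  rw [NNReal.coe_one, one_mul] at h1 h2 ⊢
  calc dist (a • p x + b • q x) (a • p y + b • q y)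
      ≤ dist (a • p x) (a • p y) + dist (b • q x) (b • q y) := dist_add_add_le _ _ _ _
    _ = a * dist (p x) (p y) + b * dist (q x) (q y) := by
        rw [dist_smul₀, dist_smul₀, Real.norm_eq_abs, Real.norm_eq_abs,
          abs_of_nonneg ha, abs_of_nonneg hb]
    _ ≤ a * dist x y + b * dist x y := by
        gcongr
    _ = dist x y := by rw [← add_mul, hab, one_mul]

/-- `Ψ` is convex and (sequentially) lower semicontinuous with respect to the `L^∞` norm on
the space of `T`-periodic Lipschitz functions. -/
theorem stmt4 (T : ℝ) (hT : 0 < T) :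
    (∀ (p q : ℝ → EuclideanSpace ℝ (Fin 3)),
      Function.Periodic p T → Function.Periodic q T →
      (∃ L, LipschitzWith L p) → (∃ L, LipschitzWith L q) →
      ∀ a b : ℝ, 0 ≤ a → 0 ≤ b → a + b = 1 →
        Psi T (fun t => a • p t + b • q t) ≤ (a : EReal) * Psi T p + (b : EReal) * Psi T q) ∧
    (∀ (q : ℝ → EuclideanSpace ℝ (Fin 3)) (qn : ℕ → ℝ → EuclideanSpace ℝ (Fin 3)),
      Function.Periodic q T → (∃ L, LipschitzWith L q) →
      (∀ n, Function.Periodic (qn n) T) → (∀ n, ∃ L, LipschitzWith L (qn n)) →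
      TendstoUniformly qn q Filter.atTop →
      Psi T q ≤ Filter.liminf (fun n => Psi T (qn n)) Filter.atTop) := by
  constructor
  · intro p q hpper hqper hpl hql a b ha hb hab
    rcases eq_or_lt_of_le ha with ha0 | hapos
    · have hb1 : b = 1 := by linarith
      have hfun : (fun t => a • p t + b • q t) = q := by
        funext t; rw [← ha0, hb1]; simp
      rw [hfun, ← ha0, hb1]
      simp only [EReal.coe_zero, EReal.coe_one, zero_mul, one_mul, zero_add]
      exact le_refl _
    rcases eq_or_lt_of_le hb with hb0 | hbpos
    · have ha1 : a = 1 := by linarith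
      have hfun : (fun t => a • p t + b • q t) = p := by
        funext t; rw [← hb0, ha1]; simp
      rw [hfun, ← hb0, ha1]
      simp only [EReal.coe_zero, EReal.coe_one, zero_mul, one_mul, add_zero]
      exact le_refl _
    by_cases hp1 : LipschitzWith 1 p
    · by_cases hq1 : LipschitzWith 1 q
      · -- main case
        have hr1 : LipschitzWith 1 (fun t => a • p t + b • q t) :=
          comb_lip hp1 hq1 ha hb hab
        rw [Psi_eq hr1, Psi_eq hp1, Psi_eq hq1, ← EReal.coe_mul, ← EReal.coe_mul,
          ← EReal.coe_add, EReal.coe_le_coe_iff]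
        have hae : ∀ᵐ t ∂(volume : Measure ℝ),
            phi (deriv (fun t => a • p t + b • q t) t)
              ≤ a * phi (deriv p t) + b * phi (deriv q t) := by
          filter_upwards [hp1.ae_differentiableAt (μ := volume),
            hq1.ae_differentiableAt (μ := volume)] with t hpt hqt
          have hd : deriv (fun t => a • p t + b • q t) t
              = a • deriv p t + b • deriv q t := by
            rw [deriv_fun_add (f := fun y => a • p y) (g := fun y => b • q y)
              (hpt.const_smul a) (hqt.const_smul b),
              deriv_fun_const_smul a hpt, deriv_fun_const_smul b hqt]
          rw [hd]
          exact phi_comb (norm_deriv_le_one hp1 t) (norm_deriv_le_one hq1 t) ha hb hab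
        have hint1 : IntervalIntegrable
            (fun t => a * phi (deriv p t) + b * phi (deriv q t)) volume 0 T :=
          ((phi_deriv_intable p 0 T).const_mul a).add ((phi_deriv_intable q 0 T).const_mul b)
        calc ∫ t in (0:ℝ)..T, phi (deriv (fun t => a • p t + b • q t) t)
            ≤ ∫ t in (0:ℝ)..T, (a * phi (deriv p t) + b * phi (deriv q t)) :=
              intervalIntegral.integral_mono_ae hT.le
                (phi_deriv_intable _ 0 T) hint1 hae
          _ = a * (∫ t in (0:ℝ)..T, phi (deriv p t))
              + b * ∫ t in (0:ℝ)..T, phi (deriv q t) := by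
              rw [intervalIntegral.integral_add ((phi_deriv_intable p 0 T).const_mul a)
                ((phi_deriv_intable q 0 T).const_mul b),
                intervalIntegral.integral_const_mul, intervalIntegral.integral_const_mul]
      · -- q not 1-Lipschitz
        have h1 : Psi T q = ⊤ := by rw [Psi, if_neg hq1]
        have h2 : (0:EReal) ≤ (a : EReal) * Psi T p := by
          apply mul_nonneg _ (Psi_nonneg hT.le p)
          exact_mod_cast ha
        have : (a : EReal) * Psi T p + (b : EReal) * Psi T q = ⊤ := by
          rw [h1, EReal.coe_mul_top_of_pos hbpos, EReal.add_top_of_ne_bot]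
          exact ((lt_of_lt_of_le (EReal.coe_zero ▸ EReal.bot_lt_coe 0) h2).ne')
        rw [this]; exact le_top
    · have h1 : Psi T p = ⊤ := by rw [Psi, if_neg hp1]
      have h2 : (0:EReal) ≤ (b : EReal) * Psi T q := by
        apply mul_nonneg _ (Psi_nonneg hT.le q)
        exact_mod_cast hb
      have : (a : EReal) * Psi T p + (b : EReal) * Psi T q = ⊤ := by
        rw [h1, EReal.coe_mul_top_of_pos hapos, EReal.top_add_of_ne_bot]
        exact ((lt_of_lt_of_le (EReal.coe_zero ▸ EReal.bot_lt_coe 0) h2).ne')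
      rw [this]; exact le_top
  · intro q qn hqper hql hqnper hqnlip hunif
    by_cases hfreq : ∃ᶠ n in atTop, LipschitzWith 1 (qn n)
    · have hq1 : LipschitzWith 1 q := lip_limit hunif hfreq
      set h : ℕ → ℝ := fun k => (1:ℝ)/(k+1) with hhdef
      have hpos : ∀ k, 0 < h k := fun k => by positivity
      have main : ∀ k : ℕ,
          ((∫ t in (0:ℝ)..T, phi ((h k)⁻¹ • (q (t + h k) - q t)) : ℝ) : EReal)
            ≤ liminf (fun n => Psi T (qn n)) atTop := by
        intro k
        have hle : ∀ n,
            ((∫ t in (0:ℝ)..T, phi ((h k)⁻¹ • (qn n (t + h k) - qn n t)) : ℝ) : EReal)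
              ≤ Psi T (qn n) := by
          intro n
          by_cases h1 : LipschitzWith 1 (qn n)
          · rw [Psi_eq h1]
            exact EReal.coe_le_coe_iff.mpr (chain hT h1 (hqnper n) (hpos k))
          · rw [Psi, if_neg h1]; exact le_top
        have htend : Tendsto
            (fun n => ∫ t in (0:ℝ)..T, phi ((h k)⁻¹ • (qn n (t + h k) - qn n t)))
            atTop (nhds (∫ t in (0:ℝ)..T, phi ((h k)⁻¹ • (q (t + h k) - q t)))) := by
          apply intervalIntegral.tendsto_integral_filter_of_dominated_convergence
            (bound := fun _ => (1:ℝ))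
          · refine Eventually.of_forall fun n => Continuous.aestronglyMeasurable ?_
            have hc : Continuous (qn n) := (hqnlip n).choose_spec.continuous
            exact phi_continuous.comp (by fun_prop :
                Continuous fun t => (h k)⁻¹ • (qn n (t + h k) - qn n t))
          · exact Eventually.of_forall fun n => Eventually.of_forall fun t _ =>
              phi_abs_le_one _
          · exact _root_.intervalIntegrable_const
          · refine Eventually.of_forall fun t _ => ?_
            apply (phi_continuous.continuousAt).tendsto.comp
            exact (Tendsto.const_smul
              ((hunif.tendsto_at (t + h k)).sub (hunif.tendsto_at t)) _)
        calc ((∫ t in (0:ℝ)..T, phi ((h k)⁻¹ • (q (t + h k) - q t)) : ℝ) : EReal)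
            = liminf (fun n =>
                ((∫ t in (0:ℝ)..T, phi ((h k)⁻¹ • (qn n (t + h k) - qn n t)) : ℝ) : EReal))
                atTop := (Filter.Tendsto.liminf_eq (EReal.tendsto_coe.mpr htend)).symm
          _ ≤ liminf (fun n => Psi T (qn n)) atTop :=
              liminf_le_liminf (Eventually.of_forall hle)
      rw [Psi_eq hq1]
      have htend2 : Tendsto
          (fun k => ((∫ t in (0:ℝ)..T, phi ((h k)⁻¹ • (q (t + h k) - q t)) : ℝ) : EReal))
          atTop (nhds ((∫ t in (0:ℝ)..T, phi (deriv q t) : ℝ) : EReal)) :=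
        EReal.tendsto_coe.mpr (tendsto_diffq hq1)
      exact le_of_tendsto' htend2 main
    · rw [Filter.not_frequently] at hfreq
      have hev : ∀ᶠ n in atTop, Psi T (qn n) = (⊤ : EReal) :=
        hfreq.mono fun n hn => by rw [Psi, if_neg hn]
      have hlim : liminf (fun n => Psi T (qn n)) atTop = ⊤ := by
        rw [liminf_congr hev, liminf_const]
      rw [hlim]; exact le_top
end

section
/- Let A ∈ C¹(ℝ⁴; ℝ³) be T-periodic in time with |∂ₜA(t,x)| + |∇A(t,x)| → 0 as |x| → ∞ uniformly in t. Let {qₙ} be a sequence of T-periodic Lipschitz functions with ‖q̇ₙ‖_∞ ≤ 1 and with mean values q̄ₙ satisfying |q̄ₙ| → ∞. Then ∫₀ᵀ q̇ₙ(t)·A(t, qₙ(t)) dt → 0 as n → ∞. -/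
open scoped RealInnerProductSpace
open MeasureTheory intervalIntegral Filter Set

section Helpers

lemma seq_tendsto_nhdsNE (t : ℝ) :
    Tendsto (fun n : ℕ => t + ((n : ℝ) + 1)⁻¹) atTop (nhdsWithin t {t}ᶜ) := by
  apply tendsto_nhdsWithin_of_tendsto_nhds_of_eventually_within
  · have h : Tendsto (fun n : ℕ => ((n : ℝ) + 1)⁻¹) atTop (nhds 0) :=
      tendsto_one_div_add_atTop_nhds_zero_nat.congr (by intro n; rw [one_div])
    simpa using tendsto_const_nhds.add h
  · filter_upwards with n
    have h0 : (0:ℝ) < ((n : ℝ) + 1)⁻¹ := by positivity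
    simp only [mem_compl_iff, mem_singleton_iff]
    intro h
    nlinarith [add_left_cancel (a := t) (b := ((n:ℝ)+1)⁻¹) (c := 0) (by simpa using h)]

lemma slope_norm_le {E : Type*} [NormedAddCommGroup E] [NormedSpace ℝ E]
    {f : ℝ → E} {K : NNReal} (hf : LipschitzWith K f) (t y : ℝ) :
    ‖slope f t y‖ ≤ K := by
  rcases eq_or_ne y t with h | h
  · simp [h, slope_def_module]
  · rw [slope_def_module, norm_smul, norm_inv, Real.norm_eq_abs]
    have h1 : ‖f y - f t‖ ≤ K * |y - t| := by
      have := hf.dist_le_mul y t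
      rwa [dist_eq_norm, Real.dist_eq] at this
    have h2 : 0 < |y - t| := abs_pos.2 (sub_ne_zero.2 h)
    rw [inv_mul_le_iff₀ h2]
    linarith [h1]

lemma norm_deriv_le_of_lip {E : Type*} [NormedAddCommGroup E] [NormedSpace ℝ E]
    {f : ℝ → E} {K : NNReal} (hf : LipschitzWith K f) (t : ℝ) :
    ‖deriv f t‖ ≤ K := by
  by_cases h : DifferentiableAt ℝ f t
  · have hd := h.hasDerivAt
    rw [hasDerivAt_iff_tendsto_slope] at hd
    have hs := (hd.comp (seq_tendsto_nhdsNE t)).norm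
    exact le_of_tendsto hs (Eventually.of_forall fun n => slope_norm_le hf _ _)
  · simp [deriv_zero_of_not_differentiableAt h]

lemma avg_tendsto {g : ℝ → ℝ} (hg : Continuous g) (c : ℝ) :
    Tendsto (fun n : ℕ => ((n:ℝ) + 1) * ∫ t in c..(c + ((n:ℝ)+1)⁻¹), g t) atTop (nhds (g c)) := by
  have hH : HasDerivAt (fun x => ∫ t in c..x, g t) (g c) c :=
    integral_hasDerivAt_right (hg.intervalIntegrable _ _)
      (hg.stronglyMeasurable.stronglyMeasurableAtFilter) hg.continuousAt
  rw [hasDerivAt_iff_tendsto_slope] at hH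
  have := hH.comp (seq_tendsto_nhdsNE c)
  refine this.congr fun n => ?_
  simp only [Function.comp_apply, slope_def_field, intervalIntegral.integral_same, sub_zero,
    add_sub_cancel_left, div_eq_mul_inv, inv_inv]
  ring

/-- Fundamental theorem of calculus for Lipschitz functions `ℝ → ℝ`. -/
lemma lipschitz_ftc {g : ℝ → ℝ} {K : NNReal} (hg : LipschitzWith K g) (a b : ℝ) :
    ∫ t in a..b, deriv g t = g b - g a := by
  set F : ℕ → ℝ → ℝ := fun n t => ((n:ℝ)+1) * (g (t + ((n:ℝ)+1)⁻¹) - g t) with hF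
  have hgc : Continuous g := hg.continuous
  have hae : ∀ᵐ t, DifferentiableAt ℝ g t := hg.ae_differentiableAt_real
  have hlim : ∀ᵐ t, t ∈ Set.uIoc a b → Tendsto (fun n => F n t) atTop (nhds (deriv g t)) := by
    filter_upwards [hae] with t ht _
    have hd := ht.hasDerivAt
    rw [hasDerivAt_iff_tendsto_slope] at hd
    refine (hd.comp (seq_tendsto_nhdsNE t)).congr fun n => ?_
    simp only [Function.comp_apply, slope_def_field, add_sub_cancel_left, div_eq_mul_inv, inv_inv, hF]
    ring
  have hbound : ∀ n : ℕ, ∀ᵐ t, t ∈ Set.uIoc a b → ‖F n t‖ ≤ (K:ℝ) := by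
    intro n
    filter_upwards with t _
    have h1 : |g (t + ((n:ℝ)+1)⁻¹) - g t| ≤ K * ((n:ℝ)+1)⁻¹ := by
      have := hg.dist_le_mul (t + ((n:ℝ)+1)⁻¹) t
      rw [Real.dist_eq, Real.dist_eq, add_sub_cancel_left,
        abs_of_pos (by positivity : (0:ℝ) < ((n:ℝ)+1)⁻¹)] at this
      exact this
    have h2 : (0:ℝ) < (n:ℝ)+1 := by positivity
    rw [hF, Real.norm_eq_abs, abs_mul, abs_of_pos h2]
    calc ((n:ℝ)+1) * |g (t + ((n:ℝ)+1)⁻¹) - g t| ≤ ((n:ℝ)+1) * ((K:ℝ) * ((n:ℝ)+1)⁻¹) := by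
          exact mul_le_mul_of_nonneg_left h1 h2.le
      _ = (K:ℝ) := by field_simp
  have hmeas : ∀ n : ℕ, AEStronglyMeasurable (F n) (volume.restrict (Set.uIoc a b)) := by
    intro n
    exact ((continuous_const.mul ((by fun_prop : Continuous fun t : ℝ => g (t + ((n:ℝ)+1)⁻¹)).sub hgc)).aestronglyMeasurable).restrict
  have hDCT := intervalIntegral.tendsto_integral_filter_of_dominated_convergence
    (μ := volume) (a := a) (b := b) (F := F) (f := fun t => deriv g t) (fun _ => (K:ℝ))
    (Eventually.of_forall hmeas) (Eventually.of_forall hbound)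
    (intervalIntegrable_const) hlim
  have hint : ∀ n : ℕ, (∫ t in a..b, F n t) =
      ((n:ℝ)+1) * (∫ t in b..(b + ((n:ℝ)+1)⁻¹), g t) - ((n:ℝ)+1) * (∫ t in a..(a + ((n:ℝ)+1)⁻¹), g t) := by
    intro n
    have hInt : ∀ u v : ℝ, IntervalIntegrable g volume u v := fun u v => hgc.intervalIntegrable u v
    have e1 : (∫ t in a..b, F n t) = ((n:ℝ)+1) * ((∫ t in a..b, g (t+((n:ℝ)+1)⁻¹)) - ∫ t in a..b, g t) := by
      rw [hF]
      rw [intervalIntegral.integral_const_mul]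
      rw [intervalIntegral.integral_sub ((by fun_prop : Continuous fun t : ℝ => g (t + ((n:ℝ)+1)⁻¹)).intervalIntegrable _ _) (hInt a b)]
    rw [e1, intervalIntegral.integral_comp_add_right]
    have e2 : (∫ t in a+((n:ℝ)+1)⁻¹..b+((n:ℝ)+1)⁻¹, g t)
        = (∫ t in a+((n:ℝ)+1)⁻¹..b, g t) + ∫ t in b..b+((n:ℝ)+1)⁻¹, g t :=
      (integral_add_adjacent_intervals (hInt _ _) (hInt _ _)).symm
    have e3 : (∫ t in a..b, g t) = (∫ t in a..a+((n:ℝ)+1)⁻¹, g t) + ∫ t in a+((n:ℝ)+1)⁻¹..b, g t :=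
      (integral_add_adjacent_intervals (hInt _ _) (hInt _ _)).symm
    rw [e2, e3]; ring
  have h2 : Tendsto (fun n : ℕ => (∫ t in a..b, F n t)) atTop (nhds (g b - g a)) := by
    have := (avg_tendsto hgc b).sub (avg_tendsto hgc a)
    exact this.congr fun n => (hint n).symm
  exact tendsto_nhds_unique hDCT h2

/-- A Lipschitz constant for an inner product of bounded Lipschitz functions. -/
lemma lipschitz_inner_of_bounded {E : Type*} [NormedAddCommGroup E] [InnerProductSpace ℝ E]
    {u v : ℝ → E} {Ku Kv : NNReal} {Cu Cv : ℝ}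
    (hu : LipschitzWith Ku u) (hv : LipschitzWith Kv v)
    (hCu : ∀ t, ‖u t‖ ≤ Cu) (hCv : ∀ t, ‖v t‖ ≤ Cv) :
    ∃ K : NNReal, LipschitzWith K (fun t => (⟪u t, v t⟫ : ℝ)) := by
  refine ⟨(Cv * Ku + Cu * Kv).toNNReal, LipschitzWith.of_dist_le_mul fun s t => ?_⟩
  have hCu0 : 0 ≤ Cu := le_trans (norm_nonneg _) (hCu 0)
  have hCv0 : 0 ≤ Cv := le_trans (norm_nonneg _) (hCv 0)
  have key : (⟪u s, v s⟫ : ℝ) - ⟪u t, v t⟫ = ⟪u s - u t, v s⟫ + ⟪u t, v s - v t⟫ := by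
    simp only [inner_sub_left, inner_sub_right]; ring
  rw [Real.dist_eq, key]
  have b1 : |(⟪u s - u t, v s⟫ : ℝ)| ≤ (Ku * dist s t) * Cv := by
    refine le_trans (abs_real_inner_le_norm _ _) (mul_le_mul ?_ (hCv s) (norm_nonneg _) (by positivity))
    have := hu.dist_le_mul s t
    rwa [dist_eq_norm] at this
  have b2 : |(⟪u t, v s - v t⟫ : ℝ)| ≤ Cu * (Kv * dist s t) := by
    refine le_trans (abs_real_inner_le_norm _ _) (mul_le_mul (hCu t) ?_ (norm_nonneg _) hCu0)
    have := hv.dist_le_mul s t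
    rwa [dist_eq_norm] at this
  have habs := abs_add_le (⟪u s - u t, v s⟫ : ℝ) (⟪u t, v s - v t⟫ : ℝ)
  have hcoe : ((Cv * Ku + Cu * Kv).toNNReal : ℝ) ≥ Cv * Ku + Cu * Kv := Real.le_coe_toNNReal _
  have hd : (0:ℝ) ≤ dist s t := dist_nonneg
  nlinarith [b1, b2, habs]

/-- A continuous periodic function is bounded in norm. -/
lemma periodic_norm_bound {E : Type*} [NormedAddCommGroup E] {f : ℝ → E} {T : ℝ}
    (hT : 0 < T) (hf : Continuous f) (hp : Function.Periodic f T) :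
    ∃ C : ℝ, ∀ t, ‖f t‖ ≤ C := by
  obtain ⟨C, hC⟩ := (isCompact_Icc (a := (0:ℝ)) (b := T)).exists_bound_of_continuousOn
    hf.continuousOn
  refine ⟨C, fun t => ?_⟩
  obtain ⟨y, hy, hfy⟩ := hp.exists_mem_Ico₀ hT t
  rw [hfy]
  exact hC y ⟨hy.1, hy.2.le⟩

/-- Interval integrability of a measurable function bounded on the interval. -/
lemma intervalIntegrable_of_bdd {f : ℝ → ℝ} {a b M : ℝ}
    (hm : AEStronglyMeasurable f volume) (hb : ∀ t ∈ Set.uIcc a b, |f t| ≤ M) :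
    IntervalIntegrable f volume a b := by
  rw [intervalIntegrable_iff]
  refine Integrable.mono' (g := fun _ => M) ?_ hm.restrict ?_
  · exact integrableOn_const (measure_Ioc_lt_top (a := min a b) (b := max a b)).ne
  · refine (ae_restrict_iff' measurableSet_uIoc).2 (ae_of_all _ fun t ht => ?_)
    simpa [Real.norm_eq_abs] using hb t (uIoc_subset_uIcc ht)

end Helpers

/-- If `A ∈ C¹(ℝ⁴;ℝ³)` is `T`-periodic in time and `|∂ₜA| + |∇A| → 0` as `|x| → ∞`
uniformly in `t`, and `qₙ` are `T`-periodic `1`-Lipschitz with `|q̄ₙ| → ∞`, then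
`∫₀ᵀ q̇ₙ·A(t,qₙ) dt → 0`. -/
theorem stmt5 (T : ℝ) (hT : 0 < T)
    (A : ℝ → EuclideanSpace ℝ (Fin 3) → EuclideanSpace ℝ (Fin 3))
    (hA : ContDiff ℝ 1 fun p : ℝ × EuclideanSpace ℝ (Fin 3) => A p.1 p.2)
    (hAper : ∀ t x, A (t + T) x = A t x)
    (hdecay : ∀ ε > 0, ∃ R : ℝ, ∀ t x, R ≤ ‖x‖ →
      ‖deriv (fun s => A s x) t‖ + ‖fderiv ℝ (A t) x‖ ≤ ε)
    (q : ℕ → ℝ → EuclideanSpace ℝ (Fin 3))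
    (hper : ∀ n, Function.Periodic (q n) T)
    (hlip : ∀ n, LipschitzWith 1 (q n))
    (hmean : Filter.Tendsto
      (fun n => ‖(T⁻¹ • ∫ t in (0:ℝ)..T, q n t : EuclideanSpace ℝ (Fin 3))‖)
      Filter.atTop Filter.atTop) :
    Filter.Tendsto (fun n => ∫ t in (0:ℝ)..T, ⟪deriv (q n) t, A t (q n t)⟫)
      Filter.atTop (nhds 0) := by
  have hAd : Differentiable ℝ (fun p : ℝ × EuclideanSpace ℝ (Fin 3) => A p.1 p.2) :=
    hA.differentiable one_ne_zero
  have hAx : ∀ t, Differentiable ℝ (A t) := fun t x => by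
    exact ((hAd (t, x)).comp x ((differentiableAt_const t).prodMk differentiableAt_id))
  rw [NormedAddCommGroup.tendsto_nhds_zero]
  intro ε hε
  set ε' : ℝ := ε / (2 * T * T + 1) with hε'
  have hε'pos : 0 < ε' := by positivity
  obtain ⟨R, hR⟩ := hdecay ε' hε'pos
  filter_upwards [hmean.eventually_ge_atTop (R + T)] with n hn
  set Q := q n with hQ
  have hQc : Continuous Q := (hlip n).continuous
  set c : EuclideanSpace ℝ (Fin 3) := T⁻¹ • ∫ t in (0:ℝ)..T, q n t with hc
  have hcR : R + T ≤ ‖c‖ := hn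
  have hcR' : R ≤ ‖c‖ := by linarith
  -- bound on Q t - c
  have htil0 : ∀ t ∈ Icc (0:ℝ) T, ‖Q t - c‖ ≤ T := by
    intro t ht
    have h1 : Q t - c = T⁻¹ • ((T • Q t) - ∫ s in (0:ℝ)..T, Q s) := by
      rw [smul_sub, hc, smul_smul, inv_mul_cancel₀ hT.ne', one_smul]
    have h2 : (T • Q t) - (∫ s in (0:ℝ)..T, Q s) = ∫ s in (0:ℝ)..T, (Q t - Q s) := by
      rw [intervalIntegral.integral_sub intervalIntegrable_const (hQc.intervalIntegrable _ _),
        intervalIntegral.integral_const, sub_zero]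
    have h3 : ‖∫ s in (0:ℝ)..T, (Q t - Q s)‖ ≤ T * |T - 0| := by
      apply intervalIntegral.norm_integral_le_of_norm_le_const
      intro s hs
      rw [uIoc_of_le hT.le] at hs
      have hd : dist (Q t) (Q s) ≤ 1 * dist t s := (hlip n).dist_le_mul t s
      rw [← dist_eq_norm]
      calc dist (Q t) (Q s) ≤ 1 * dist t s := hd
        _ = |t - s| := by rw [one_mul, Real.dist_eq]
        _ ≤ T := by
            rw [abs_le]
            constructor <;> linarith [ht.1, ht.2, hs.1, hs.2]
    rw [h1, h2, norm_smul, norm_inv, Real.norm_eq_abs, abs_of_pos hT]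
    calc T⁻¹ * ‖∫ s in (0:ℝ)..T, (Q t - Q s)‖ ≤ T⁻¹ * (T * |T - 0|) := by
          exact mul_le_mul_of_nonneg_left h3 (by positivity)
      _ = T := by rw [sub_zero, abs_of_pos hT]; field_simp
  have htil : ∀ t, ‖Q t - c‖ ≤ T := by
    intro t
    have hp : Function.Periodic (fun t => ‖Q t - c‖) T := fun s => by
      simp only [hQ, hper n s]
    obtain ⟨y, hy, hfy⟩ := hp.exists_mem_Ico₀ hT t
    exact hfy ▸ htil0 y ⟨hy.1, hy.2.le⟩
  -- the vector potential along the mean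
  set B : ℝ → EuclideanSpace ℝ (Fin 3) := fun t => A t c with hB
  have hBcd : ContDiff ℝ 1 B := hA.comp (contDiff_id.prodMk contDiff_const)
  have hBc : Continuous B := hBcd.continuous
  have hBdiff : Differentiable ℝ B := hBcd.differentiable one_ne_zero
  have hB'c : Continuous (deriv B) := hBcd.continuous_deriv le_rfl
  have hB'small : ∀ t, ‖deriv B t‖ ≤ ε' := by
    intro t
    have := hR t c hcR'
    have h0 := norm_nonneg (fderiv ℝ (A t) c)
    have he : deriv B t = deriv (fun s => A s c) t := rfl
    rw [he]; linarith
  have hBper : Function.Periodic B T := fun t => hAper t c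
  have hB'per : Function.Periodic (deriv B) T := by
    intro t
    have hfun : (fun s => B (s + T)) = B := funext fun s => hBper s
    calc deriv B (t + T) = deriv (fun s => B (s + T)) t := (deriv_comp_add_const B T t).symm
      _ = deriv B t := by rw [hfun]
  obtain ⟨CB, hCB⟩ := periodic_norm_bound hT hBc hBper
  obtain ⟨CB', hCB'⟩ := periodic_norm_bound hT hB'c hB'per
  have hBlip : LipschitzWith CB'.toNNReal B := by
    apply lipschitzWith_of_nnnorm_deriv_le hBdiff
    intro t
    rw [← norm_toNNReal]
    exact Real.toNNReal_mono (hCB' t)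
  have hQtilLip : LipschitzWith 1 (fun t => Q t - c) := by
    apply LipschitzWith.of_dist_le_mul
    intro s t
    have := (hlip n).dist_le_mul s t
    simpa [dist_sub_right] using this
  -- the auxiliary function g and its FTC
  obtain ⟨Kg, hKg⟩ := lipschitz_inner_of_bounded hQtilLip hBlip htil hCB
  set g : ℝ → ℝ := fun t => ⟪Q t - c, B t⟫ with hg
  have hgper0 : g T = g 0 := by
    have h1 : Q T = Q 0 := by simpa using hper n 0
    have h2 : B T = B 0 := by
      have := hAper 0 c
      simp only [hB]
      rw [show (T:ℝ) = 0 + T by ring, this]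
    simp only [hg, h1, h2]
  have hftc : (∫ t in (0:ℝ)..T, deriv g t) = 0 := by
    rw [lipschitz_ftc hKg, hgper0, sub_self]
  -- a.e. derivative of g
  have hderivg : ∀ᵐ t, deriv g t = ⟪Q t - c, deriv B t⟫ + ⟪deriv Q t, B t⟫ := by
    filter_upwards [(hlip n).ae_differentiableAt_real] with t ht
    have h1 : HasDerivAt (fun s => Q s - c) (deriv Q t) t := ht.hasDerivAt.sub_const c
    have h2 : HasDerivAt B (deriv B t) t := (hBdiff t).hasDerivAt
    exact (HasDerivAt.inner (𝕜 := ℝ) h1 h2).deriv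
  -- mean value estimate
  have hseg : ∀ t, ‖A t (Q t) - B t‖ ≤ ε' * T := by
    intro t
    have hsegR : ∀ x ∈ segment ℝ c (Q t), R ≤ ‖x‖ := by
      rintro x ⟨a, b, ha, hb, hab, rfl⟩
      have hab' : a = 1 - b := by linarith
      subst hab'
      have e : (1 - b) • c + b • Q t - c = b • (Q t - c) := by
        rw [smul_sub, sub_smul, one_smul]; abel
      have hb1 : b ≤ 1 := by linarith
      have hnorm : ‖(1 - b) • c + b • Q t - c‖ ≤ T := by
        rw [e, norm_smul, Real.norm_eq_abs, abs_of_nonneg hb]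
        calc b * ‖Q t - c‖ ≤ 1 * T :=
              mul_le_mul hb1 (htil t) (norm_nonneg _) zero_le_one
          _ = T := one_mul T
      have htri : ‖c‖ ≤ ‖(1 - b) • c + b • Q t‖ + ‖(1 - b) • c + b • Q t - c‖ := by
        calc ‖c‖ = ‖((1 - b) • c + b • Q t) - (((1 - b) • c + b • Q t) - c)‖ := by
              congr 1; abel
          _ ≤ _ := norm_sub_le _ _
      linarith
    have hfd : ∀ x ∈ segment ℝ c (Q t), ‖fderiv ℝ (A t) x‖ ≤ ε' := by
      intro x hx
      have := hR t x (hsegR x hx)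
      have h0 := norm_nonneg (deriv (fun s => A s x) t)
      linarith
    have := Convex.norm_image_sub_le_of_norm_fderiv_le
      (fun x _ => (hAx t) x) hfd (convex_segment c (Q t))
      (left_mem_segment ℝ c (Q t)) (right_mem_segment ℝ c (Q t))
    calc ‖A t (Q t) - B t‖ ≤ ε' * ‖Q t - c‖ := this
      _ ≤ ε' * T := mul_le_mul_of_nonneg_left (htil t) hε'pos.le
  -- the error term
  set f2 : ℝ → ℝ := fun t => ⟪deriv Q t, A t (Q t) - B t⟫ - ⟪Q t - c, deriv B t⟫ with hf2
  have hQ'le : ∀ t, ‖deriv Q t‖ ≤ 1 := fun t => by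
    simpa using norm_deriv_le_of_lip (hlip n) t
  have hf2bdd : ∀ t, |f2 t| ≤ ε' * T + T * ε' := by
    intro t
    have b1 : |(⟪deriv Q t, A t (Q t) - B t⟫ : ℝ)| ≤ 1 * (ε' * T) := by
      refine le_trans (abs_real_inner_le_norm _ _) ?_
      exact mul_le_mul (hQ'le t) (hseg t) (norm_nonneg _) zero_le_one
    have b2 : |(⟪Q t - c, deriv B t⟫ : ℝ)| ≤ T * ε' := by
      refine le_trans (abs_real_inner_le_norm _ _) ?_
      exact mul_le_mul (htil t) (hB'small t) (norm_nonneg _) hT.le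
    calc |f2 t| ≤ |(⟪deriv Q t, A t (Q t) - B t⟫ : ℝ)| + |(⟪Q t - c, deriv B t⟫ : ℝ)| :=
          abs_sub _ _
      _ ≤ 1 * (ε' * T) + T * ε' := add_le_add b1 b2
      _ = ε' * T + T * ε' := by ring
  -- measurability and integrability
  have hmQ' : AEStronglyMeasurable (deriv Q) volume :=
    (stronglyMeasurable_deriv Q).aestronglyMeasurable
  have hcont1 : Continuous fun t => A t (Q t) := by
    exact hA.continuous.comp (continuous_id.prodMk hQc)
  have hm1 : AEStronglyMeasurable (fun t => (⟪deriv Q t, A t (Q t)⟫ : ℝ)) volume :=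
    hmQ'.inner hcont1.aestronglyMeasurable
  have hm2 : AEStronglyMeasurable f2 volume := by
    refine AEStronglyMeasurable.sub (hmQ'.inner (hcont1.sub hBc).aestronglyMeasurable) ?_
    exact ((hQc.sub continuous_const).aestronglyMeasurable.inner hB'c.aestronglyMeasurable)
  obtain ⟨M1, hM1⟩ := (isCompact_Icc (a := (0:ℝ)) (b := T)).exists_bound_of_continuousOn
    hcont1.continuousOn
  have hI1 : IntervalIntegrable (fun t => (⟪deriv Q t, A t (Q t)⟫ : ℝ)) volume 0 T := by
    refine intervalIntegrable_of_bdd (M := M1) hm1 ?_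
    intro t ht
    rw [uIcc_of_le hT.le] at ht
    refine le_trans (abs_real_inner_le_norm _ _) ?_
    have hM1' : 0 ≤ M1 := le_trans (norm_nonneg _) (hM1 0 ⟨le_refl _, hT.le⟩)
    calc ‖deriv Q t‖ * ‖A t (Q t)‖ ≤ 1 * M1 :=
          mul_le_mul (hQ'le t) (hM1 t ht) (norm_nonneg _) zero_le_one
      _ = M1 := one_mul _
  have hI2 : IntervalIntegrable f2 volume 0 T :=
    intervalIntegrable_of_bdd hm2 (fun t _ => hf2bdd t)
  have hI3 : IntervalIntegrable (deriv g) volume 0 T := by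
    refine intervalIntegrable_of_bdd (M := (Kg : ℝ))
      (stronglyMeasurable_deriv g).aestronglyMeasurable (fun t _ => ?_)
    have := norm_deriv_le_of_lip hKg t
    rwa [Real.norm_eq_abs] at this
  -- main identity
  have hsplit : (∫ t in (0:ℝ)..T, ⟪deriv Q t, A t (Q t)⟫)
      = (∫ t in (0:ℝ)..T, f2 t) + ∫ t in (0:ℝ)..T, deriv g t := by
    rw [← intervalIntegral.integral_add hI2 hI3]
    apply intervalIntegral.integral_congr_ae
    filter_upwards [hderivg] with t hdg _
    rw [hdg]
    simp only [hf2, inner_sub_right]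
    ring
  rw [hsplit, hftc, add_zero]
  have hfinal : ‖∫ t in (0:ℝ)..T, f2 t‖ ≤ (ε' * T + T * ε') * |T - 0| := by
    apply intervalIntegral.norm_integral_le_of_norm_le_const
    intro t _
    rw [Real.norm_eq_abs]
    exact hf2bdd t
  have heq : (ε' * T + T * ε') * |T - 0| = ε * (2 * T * T) / (2 * T * T + 1) := by
    rw [sub_zero, abs_of_pos hT, hε']
    field_simp
    ring
  refine lt_of_le_of_lt hfinal ?_
  rw [heq, div_lt_iff₀ (by positivity)]
  nlinarith
end

section
/- Let A ∈ C¹(ℝ⁴;ℝ³) be T-periodic in time with |∂ₜA| + |∇A| → 0 at spatial infinity uniformly in t, and let Φ : ℝ × ℝ³ → ℝ be T-periodic continuous in t, C¹ in x, bounded above with sup_x ∫₀ᵀ Φ(t,x)dt = 0 and |∇Φ| → 0 at infinity uniformly in t. Then the action functional I(q) = ∫₀ᵀ (1 − √(1 − |q̇|²)) dt + ∫₀ᵀ (q̇·A(t,q) − Φ(t,q)) dt is bounded from below on K = {q T-periodic Lipschitz : ‖q̇‖_∞ ≤ 1}. -/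
open scoped RealInnerProductSpace
open MeasureTheory Filter Topology

lemma per_lip_integral_deriv_zero {K : NNReal} {g : ℝ → ℝ} {T : ℝ} (hT : 0 < T)
    (hg : LipschitzWith K g) (hper : Function.Periodic g T) :
    ∫ t in (0:ℝ)..T, deriv g t = 0 := by
  have hcont : Continuous g := hg.continuous
  set μ := volume.restrict (Set.Ioc (0:ℝ) T) with hμ
  set F : ℕ → ℝ → ℝ := fun n t => ((n:ℝ)+1) * (g (t + ((n:ℝ)+1)⁻¹) - g t) with hF
  have hFint : ∀ n : ℕ, ∫ t in (0:ℝ)..T, F n t = 0 := by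
    intro n
    have hint1 : IntervalIntegrable (fun t => g (t + ((n:ℝ)+1)⁻¹)) volume 0 T :=
      (hcont.comp (continuous_add_right _) :
        Continuous fun t : ℝ => g (t + ((n:ℝ)+1)⁻¹)).intervalIntegrable 0 T
    have h1 : (∫ t in (0:ℝ)..T, g (t + ((n:ℝ)+1)⁻¹)) = ∫ t in (0:ℝ)..T, g t := by
      rw [intervalIntegral.integral_comp_add_right, zero_add, add_comm T (((n:ℝ)+1)⁻¹)]
      simpa using hper.intervalIntegral_add_eq (((n:ℝ)+1)⁻¹) 0
    rw [hF]
    rw [intervalIntegral.integral_const_mul, intervalIntegral.integral_sub hint1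
      (hcont.intervalIntegrable 0 T), h1, sub_self, mul_zero]
  have hmeas : Measurable (deriv g) := measurable_deriv g
  have hbound : ∀ n : ℕ, ∀ᵐ t ∂μ, ‖F n t‖ ≤ (K : ℝ) := by
    intro n
    refine Eventually.of_forall fun t => ?_
    have h1 : |g (t + ((n:ℝ)+1)⁻¹) - g t| ≤ (K : ℝ) * ((n:ℝ)+1)⁻¹ := by
      have := hg.dist_le_mul (t + ((n:ℝ)+1)⁻¹) t
      rw [Real.dist_eq, Real.dist_eq] at this
      simpa [abs_of_nonneg (by positivity : (0:ℝ) ≤ ((n:ℝ)+1)⁻¹)] using this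
    have hn : (0:ℝ) < (n:ℝ)+1 := by positivity
    rw [hF]
    simp only [Real.norm_eq_abs, abs_mul, abs_of_nonneg hn.le]
    calc ((n:ℝ)+1) * |g (t + ((n:ℝ)+1)⁻¹) - g t| ≤ ((n:ℝ)+1) * ((K:ℝ) * ((n:ℝ)+1)⁻¹) := by
          exact mul_le_mul_of_nonneg_left h1 hn.le
      _ = (K : ℝ) := by field_simp
  have hae : ∀ᵐ t ∂μ, Tendsto (fun n : ℕ => F n t) atTop (𝓝 (deriv g t)) := by
    have h0 : ∀ᵐ t ∂(volume : Measure ℝ), DifferentiableAt ℝ g t := hg.ae_differentiableAt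
    refine ae_restrict_of_ae (h0.mono fun t ht => ?_)
    have hd : HasDerivAt g (deriv g t) t := ht.hasDerivAt
    rw [hasDerivAt_iff_tendsto_slope] at hd
    have hseq : Tendsto (fun n : ℕ => t + ((n:ℝ)+1)⁻¹) atTop (𝓝[≠] t) := by
      rw [tendsto_nhdsWithin_iff]
      constructor
      · have : Tendsto (fun n : ℕ => ((n:ℝ)+1)⁻¹) atTop (𝓝 0) := by
          simpa [one_div] using tendsto_one_div_add_atTop_nhds_zero_nat (𝕜 := ℝ)
        simpa using (tendsto_const_nhds.add this)
      · refine Eventually.of_forall fun n => ?_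
        simp only [Set.mem_compl_iff, Set.mem_singleton_iff]
        intro h
        have : ((n:ℝ)+1)⁻¹ = 0 := by linarith [congrArg (fun x => x - t) h]
        exact (by positivity : ((0:ℝ)) < ((n:ℝ)+1)⁻¹).ne' this
    have := hd.comp hseq
    refine this.congr fun n => ?_
    show slope g t (t + ((n:ℝ)+1)⁻¹) = F n t
    rw [slope_def_field, add_sub_cancel_left, div_eq_mul_inv, inv_inv]
    ring
  have hFm : ∀ n : ℕ, AEStronglyMeasurable (F n) μ := by
    intro n
    exact ((continuous_const.mul ((hcont.comp (continuous_id.add continuous_const)).sub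
      hcont))).aestronglyMeasurable
  have hbdd_int : Integrable (fun _ : ℝ => (K : ℝ)) μ := integrable_const _
  have main := tendsto_integral_of_dominated_convergence (μ := μ) (F := F) (f := deriv g)
    (fun _ => (K : ℝ)) hFm hbdd_int hbound hae
  have h2 : ∀ n : ℕ, ∫ t, F n t ∂μ = 0 := by
    intro n
    have := hFint n
    rwa [intervalIntegral.integral_of_le hT.le] at this
  have h3 : Tendsto (fun _ : ℕ => (0:ℝ)) atTop (𝓝 (∫ t, deriv g t ∂μ)) := by
    refine main.congr fun n => (h2 n)
  have h4 : (∫ t, deriv g t ∂μ) = 0 := tendsto_nhds_unique h3 tendsto_const_nhds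
  rw [intervalIntegral.integral_of_le hT.le]
  exact h4

lemma per_lip_inner_integral_zero {T : ℝ} (hT : 0 < T)
    {q : ℝ → EuclideanSpace ℝ (Fin 3)} (hq : LipschitzWith 1 q)
    (hper : Function.Periodic q T) (v : EuclideanSpace ℝ (Fin 3)) :
    ∫ t in (0:ℝ)..T, ⟪deriv q t, v⟫ = 0 := by
  set g : ℝ → ℝ := fun t => ⟪v, q t⟫ with hgdef
  have hgl : LipschitzWith (‖(innerSL ℝ v : EuclideanSpace ℝ (Fin 3) →L[ℝ] ℝ)‖₊ * 1) g :=
    ((innerSL ℝ v).lipschitz).comp hq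
  have hgper : Function.Periodic g T := fun t => by simp [hgdef, hper t]
  have hz : ∫ t in (0:ℝ)..T, deriv g t = 0 := per_lip_integral_deriv_zero hT hgl hgper
  have hae : ∀ᵐ t ∂(volume : Measure ℝ), deriv g t = ⟪deriv q t, v⟫ := by
    refine hq.ae_differentiableAt.mono fun t ht => ?_
    have h1 : HasDerivAt g (⟪v, deriv q t⟫ + ⟪(0 : EuclideanSpace ℝ (Fin 3)), q t⟫) t :=
      (hasDerivAt_const t v).inner ℝ ht.hasDerivAt
    have h2 : HasDerivAt g ⟪deriv q t, v⟫ t := by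
      have he : ⟪deriv q t, v⟫ = ⟪v, deriv q t⟫ + ⟪(0 : EuclideanSpace ℝ (Fin 3)), q t⟫ := by
        rw [inner_zero_left, add_zero, real_inner_comm]
      rw [he]; exact h1
    exact h2.deriv
  calc (∫ t in (0:ℝ)..T, ⟪deriv q t, v⟫) = ∫ t in (0:ℝ)..T, deriv g t := by
        refine intervalIntegral.integral_congr_ae ?_
        exact (hae.mono fun t ht => fun _ => ht.symm)
    _ = 0 := hz

set_option maxHeartbeats 1000000 in

/-- Under the decay hypotheses on `A` and `Φ` (with `sup_x ∫₀ᵀ Φ(t,x)dt = 0`), the action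
functional `I(q) = ∫₀ᵀ (1 − √(1 − |q̇|²)) dt + ∫₀ᵀ (q̇·A(t,q) − Φ(t,q)) dt` is bounded from
below on `K = {q T-periodic Lipschitz : ‖q̇‖_∞ ≤ 1}`. -/
theorem stmt7 (T : ℝ) (hT : 0 < T)
    (A : ℝ → EuclideanSpace ℝ (Fin 3) → EuclideanSpace ℝ (Fin 3))
    (Φ : ℝ → EuclideanSpace ℝ (Fin 3) → ℝ)
    (hA : ContDiff ℝ 1 fun p : ℝ × EuclideanSpace ℝ (Fin 3) => A p.1 p.2)
    (hAper : ∀ t x, A (t + T) x = A t x)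
    (hAdecay : ∀ ε > 0, ∃ R : ℝ, ∀ t x, R ≤ ‖x‖ →
      ‖deriv (fun s => A s x) t‖ + ‖fderiv ℝ (A t) x‖ ≤ ε)
    (hΦcont : Continuous fun p : ℝ × EuclideanSpace ℝ (Fin 3) => Φ p.1 p.2)
    (hΦper : ∀ t x, Φ (t + T) x = Φ t x)
    (hΦdiff : ∀ t, Differentiable ℝ (Φ t))
    (hΦbdd : ∃ C : ℝ, ∀ t x, Φ t x ≤ C)
    (hΦsup : IsLUB (Set.range fun x => ∫ t in (0:ℝ)..T, Φ t x) 0)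
    (hΦdecay : ∀ ε > 0, ∃ R : ℝ, ∀ t x, R ≤ ‖x‖ → ‖gradient (Φ t) x‖ ≤ ε) :
    ∃ c : ℝ, ∀ q : ℝ → EuclideanSpace ℝ (Fin 3),
      Function.Periodic q T → LipschitzWith 1 q →
      c ≤ (∫ t in (0:ℝ)..T, (1 - Real.sqrt (1 - ‖deriv q t‖ ^ 2))) +
          ∫ t in (0:ℝ)..T, (⟪deriv q t, A t (q t)⟫ - Φ t (q t)) := by
  classical
  obtain ⟨Ra, hRa⟩ := hAdecay 1 one_pos
  obtain ⟨Rp, hRp⟩ := hΦdecay 1 one_pos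
  obtain ⟨C, hC⟩ := hΦbdd
  have hAc : Continuous fun p : ℝ × EuclideanSpace ℝ (Fin 3) => A p.1 p.2 := hA.continuous
  have hAx : ∀ t, Differentiable ℝ (A t) := fun t x =>
    ((hA.differentiable one_ne_zero) (t, x)).comp x
      ((differentiableAt_const t).prodMk differentiableAt_id)
  have hAt : ∀ x, Differentiable ℝ (fun s => A s x) := fun x s => by
    have hp : DifferentiableAt ℝ (fun s : ℝ => (s, x)) s :=
      DifferentiableAt.prodMk (f₁ := fun s : ℝ => s) differentiableAt_id (differentiableAt_const x)
    exact ((hA.differentiable one_ne_zero) (s, x)).comp s hp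
  set ρ : ℝ := max Ra Rp + T with hρ
  obtain ⟨M, hM⟩ := (isCompact_Icc.prod
    (isCompact_closedBall (0 : EuclideanSpace ℝ (Fin 3)) (ρ + T))).exists_bound_of_continuousOn
    (hAc.continuousOn (s := Set.Icc (0:ℝ) T ×ˢ Metric.closedBall 0 (ρ + T)))
  set B : ℝ := max M 0 + max C 0 with hB
  have hBnn : 0 ≤ B := add_nonneg (le_max_right _ _) (le_max_right _ _)
  refine ⟨-(3*T^2) - T*B, ?_⟩
  intro q hqper hqlip
  have hqc : Continuous q := hqlip.continuous
  have hd1 : ∀ t, ‖deriv q t‖ ≤ 1 := fun t => by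
    simpa using norm_deriv_le_of_lipschitz hqlip
  have hI1 : 0 ≤ ∫ t in (0:ℝ)..T, (1 - Real.sqrt (1 - ‖deriv q t‖ ^ 2)) := by
    refine intervalIntegral.integral_nonneg hT.le fun u _ => ?_
    have h := Real.sqrt_le_one.mpr (show (1 : ℝ) - ‖deriv q u‖ ^ 2 ≤ 1 by nlinarith [sq_nonneg ‖deriv q u‖])
    linarith
  have hqd : ∀ t ∈ Set.Icc (0:ℝ) T, ‖q t - q 0‖ ≤ T := by
    intro t ht
    calc ‖q t - q 0‖ = dist (q t) (q 0) := (dist_eq_norm _ _).symm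
      _ ≤ 1 * dist t 0 := hqlip.dist_le_mul t 0
      _ = |t| := by rw [Real.dist_eq, one_mul, sub_zero]
      _ ≤ T := by rw [abs_of_nonneg ht.1]; exact ht.2
  set f₂ : ℝ → ℝ := fun t => ⟪deriv q t, A t (q t)⟫ - Φ t (q t) with hf₂
  have hAqc : Continuous fun t => A t (q t) := hAc.comp (continuous_id.prodMk hqc)
  have hΦqc : Continuous fun t => Φ t (q t) := hΦcont.comp (continuous_id.prodMk hqc)
  have hmeas2 : Measurable f₂ :=
    ((measurable_deriv q).inner hAqc.measurable).sub hΦqc.measurable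
  have hinner_le : ∀ (t : ℝ) (w : EuclideanSpace ℝ (Fin 3)), |⟪deriv q t, w⟫| ≤ ‖w‖ := by
    intro t w
    calc |⟪deriv q t, w⟫| ≤ ‖deriv q t‖ * ‖w‖ := abs_real_inner_le_norm _ _
      _ ≤ 1 * ‖w‖ := mul_le_mul_of_nonneg_right (hd1 t) (norm_nonneg _)
      _ = ‖w‖ := one_mul _
  have hint2 : IntervalIntegrable f₂ volume 0 T := by
    refine IntervalIntegrable.mono_fun' ((hAqc.norm.add hΦqc.abs).intervalIntegrable 0 T)
      hmeas2.aestronglyMeasurable ?_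
    refine Eventually.of_forall fun t => ?_
    show ‖f₂ t‖ ≤ ‖A t (q t)‖ + |Φ t (q t)|
    rw [hf₂]
    simp only [Real.norm_eq_abs]
    rw [sub_eq_add_neg]
    refine le_trans (abs_add_le _ _) ?_
    rw [abs_neg]
    have := hinner_le t (A t (q t))
    linarith
  by_cases hbig : max Ra Rp + T ≤ ‖q 0‖
  · -- large case
    set v := A 0 (q 0) with hv
    have hnormz : ∀ t ∈ Set.Icc (0:ℝ) T, ∀ z ∈ segment ℝ (q 0) (q t), max Ra Rp ≤ ‖z‖ := by
      intro t ht z hz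
      have hseg : z ∈ Metric.closedBall (q 0) T :=
        (convex_closedBall (q 0) T).segment_subset
          (Metric.mem_closedBall_self hT.le)
          (by rw [Metric.mem_closedBall, dist_eq_norm]; exact hqd t ht) hz
      have h1 : ‖z - q 0‖ ≤ T := by
        rw [← dist_eq_norm]; exact Metric.mem_closedBall.mp hseg
      have h2 : ‖q 0‖ - ‖z‖ ≤ ‖q 0 - z‖ := norm_sub_norm_le _ _
      rw [norm_sub_rev] at h2
      linarith
    have hs1 : ∀ t ∈ Set.Icc (0:ℝ) T, ‖A t (q t) - A t (q 0)‖ ≤ T := by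
      intro t ht
      have key := (convex_segment (q 0) (q t)).norm_image_sub_le_of_norm_fderiv_le
        (f := A t) (C := 1) (fun z _ => hAx t z)
        (fun z hz => by
          have := hRa t z (le_trans (le_max_left _ _) (hnormz t ht z hz))
          linarith [norm_nonneg (deriv (fun s => A s z) t)])
        (left_mem_segment ℝ _ _) (right_mem_segment ℝ _ _)
      calc ‖A t (q t) - A t (q 0)‖ ≤ 1 * ‖q t - q 0‖ := key
        _ ≤ T := by rw [one_mul]; exact hqd t ht
    have hq0big : Ra ≤ ‖q 0‖ ∧ Rp ≤ ‖q 0‖ := by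
      constructor
      · linarith [le_max_left Ra Rp]
      · linarith [le_max_right Ra Rp]
    have hs2 : ∀ t ∈ Set.Icc (0:ℝ) T, ‖A t (q 0) - A 0 (q 0)‖ ≤ T := by
      intro t ht
      have key := (convex_Icc (0:ℝ) T).norm_image_sub_le_of_norm_deriv_le
        (f := fun s => A s (q 0)) (C := 1) (fun s _ => hAt (q 0) s)
        (fun s _ => by
          have := hRa s (q 0) hq0big.1
          linarith [norm_nonneg (fderiv ℝ (A s) (q 0))])
        (Set.left_mem_Icc.mpr hT.le) ht
      calc ‖A t (q 0) - A 0 (q 0)‖ ≤ 1 * ‖t - 0‖ := key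
        _ ≤ T := by
          rw [one_mul, sub_zero, Real.norm_eq_abs, abs_of_nonneg ht.1]; exact ht.2
    have hs3 : ∀ t ∈ Set.Icc (0:ℝ) T, |Φ t (q t) - Φ t (q 0)| ≤ T := by
      intro t ht
      have key := (convex_segment (q 0) (q t)).norm_image_sub_le_of_norm_fderiv_le
        (f := Φ t) (C := 1) (fun z _ => hΦdiff t z)
        (fun z hz => by
          have h1 := hRp t z (le_trans (le_max_right _ _) (hnormz t ht z hz))
          have h2 : ‖fderiv ℝ (Φ t) z‖ = ‖gradient (Φ t) z‖ := by
            rw [gradient, LinearIsometryEquiv.norm_map]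
          linarith)
        (left_mem_segment ℝ _ _) (right_mem_segment ℝ _ _)
      calc |Φ t (q t) - Φ t (q 0)| = ‖Φ t (q t) - Φ t (q 0)‖ := rfl
        _ ≤ 1 * ‖q t - q 0‖ := key
        _ ≤ T := by rw [one_mul]; exact hqd t ht
    set gl : ℝ → ℝ := fun t => ⟪deriv q t, v⟫ - Φ t (q 0) - 3*T with hgldef
    have hIv : IntervalIntegrable (fun t => ⟪deriv q t, v⟫) volume 0 T := by
      refine IntervalIntegrable.mono_fun' (intervalIntegrable_const (c := ‖v‖))
        (Measurable.inner_const (c := v) (measurable_deriv q)).aestronglyMeasurable ?_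
      exact Eventually.of_forall fun t => by
        simpa [Real.norm_eq_abs] using hinner_le t v
    have hΦ0c : Continuous fun t => Φ t (q 0) :=
      hΦcont.comp (continuous_id.prodMk continuous_const)
    have hΦ0int : IntervalIntegrable (fun t => Φ t (q 0)) volume 0 T :=
      hΦ0c.intervalIntegrable 0 T
    have hglint : IntervalIntegrable gl volume 0 T :=
      (hIv.sub hΦ0int).sub intervalIntegrable_const
    have hmono : ∀ t ∈ Set.Icc (0:ℝ) T, gl t ≤ f₂ t := by
      intro t ht
      have key : ‖A t (q t) - v‖ ≤ 2*T := by
        have htri : ‖A t (q t) - v‖ ≤ ‖A t (q t) - A t (q 0)‖ + ‖A t (q 0) - v‖ := by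
          have : A t (q t) - v = (A t (q t) - A t (q 0)) + (A t (q 0) - v) := by abel
          rw [this]; exact norm_add_le _ _
        have := hs1 t ht; have := hs2 t ht
        rw [hv]
        linarith [hs1 t ht, hs2 t ht, htri]
      have hin : -(2*T) ≤ ⟪deriv q t, A t (q t)⟫ - ⟪deriv q t, v⟫ := by
        have h1 := hinner_le t (A t (q t) - v)
        rw [inner_sub_right] at h1
        have h3 : |⟪deriv q t, A t (q t)⟫ - ⟪deriv q t, v⟫| ≤ 2*T := by
          rw [← inner_sub_right]
          calc |⟪deriv q t, A t (q t) - v⟫| ≤ ‖A t (q t) - v‖ := hinner_le t _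
            _ ≤ 2*T := key
        linarith [abs_le.mp h3]
      have hphi := abs_le.mp (hs3 t ht)
      rw [hgldef, hf₂]
      simp only []
      linarith [hin, hphi.2]
    have hglow : -(3*T^2) ≤ ∫ t in (0:ℝ)..T, gl t := by
      rw [hgldef]
      rw [intervalIntegral.integral_sub (hIv.sub hΦ0int) intervalIntegrable_const,
          intervalIntegral.integral_sub hIv hΦ0int,
          per_lip_inner_integral_zero hT hqlip hqper v,
          intervalIntegral.integral_const]
      have hΦ0le : (∫ t in (0:ℝ)..T, Φ t (q 0)) ≤ 0 := hΦsup.1 ⟨q 0, rfl⟩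
      have : ((T:ℝ) - 0) • (3*T) = 3*T^2 := by
        simp [smul_eq_mul]; ring
      rw [this]
      linarith
    have h2 := intervalIntegral.integral_mono_on hT.le hglint hint2 hmono
    have hTB : 0 ≤ T*B := mul_nonneg hT.le hBnn
    linarith
  · -- small case
    push_neg at hbig
    have hmono : ∀ t ∈ Set.Icc (0:ℝ) T, -B ≤ f₂ t := by
      intro t ht
      have hx : (t, q t) ∈ Set.Icc (0:ℝ) T ×ˢ Metric.closedBall (0 : EuclideanSpace ℝ (Fin 3)) (ρ + T) := by
        refine ⟨ht, ?_⟩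
        rw [Metric.mem_closedBall, dist_zero_right]
        have h1 : ‖q t‖ ≤ ‖q t - q 0‖ + ‖q 0‖ := by
          have h0 := norm_add_le (q t - q 0) (q 0)
          rwa [sub_add_cancel] at h0
        linarith [hqd t ht]
      have hMt : ‖A t (q t)‖ ≤ M := by have h := hM (t, q t) hx; simpa using h
      have h1 : -(max M 0) ≤ ⟪deriv q t, A t (q t)⟫ := by
        have := abs_le.mp (le_trans (hinner_le t (A t (q t))) (le_trans hMt (le_max_left M 0)))
        linarith [this.1]
      have h2 : Φ t (q t) ≤ max C 0 := le_trans (hC t _) (le_max_left _ _)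
      rw [hf₂, hB]
      simp only []
      linarith
    have h2 : ((T:ℝ) - 0) • (-B) ≤ ∫ t in (0:ℝ)..T, f₂ t := by
      have := intervalIntegral.integral_mono_on hT.le (intervalIntegrable_const (c := -B))
        hint2 hmono
      rwa [intervalIntegral.integral_const] at this
    rw [sub_zero, smul_eq_mul] at h2
    have hT2 : 0 ≤ 3*T^2 := by positivity
    nlinarith [hI1, h2]
end

section
/- Let A ∈ C¹(ℝ⁴;ℝ³) be T-periodic in t with ‖∇A‖_∞ = M < ∞, and suppose there exists b ∈ ℝ³ such that t ↦ A(t,b) is non-constant. Then there exists p in K = {T-periodic Lipschitz functions with ‖q̇‖_∞ ≤ 1} such that I₀(p) := ∫₀ᵀ (1 − √(1 − |ṗ|²)) dt + ∫₀ᵀ ṗ·A(t,p) dt < 0. -/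
open scoped RealInnerProductSpace
open MeasureTheory Set

set_option maxHeartbeats 1000000

/-- If `A ∈ C¹(ℝ⁴;ℝ³)` is `T`-periodic in `t`, has bounded spatial Jacobian, and
`t ↦ A(t,b)` is non-constant for some `b`, then there is `p ∈ K` with
`I₀(p) = ∫₀ᵀ (1 − √(1 − |ṗ|²)) dt + ∫₀ᵀ ṗ·A(t,p) dt < 0`. -/
theorem stmt10 (T : ℝ) (hT : 0 < T)
    (A : ℝ → EuclideanSpace ℝ (Fin 3) → EuclideanSpace ℝ (Fin 3)) (M : ℝ)
    (hA : ContDiff ℝ 1 fun p : ℝ × EuclideanSpace ℝ (Fin 3) => A p.1 p.2)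
    (hAper : ∀ t x, A (t + T) x = A t x)
    (hM : ∀ t x, ‖fderiv ℝ (A t) x‖ ≤ M)
    (hnc : ∃ (b : EuclideanSpace ℝ (Fin 3)) (t₁ t₂ : ℝ), A t₁ b ≠ A t₂ b) :
    ∃ p : ℝ → EuclideanSpace ℝ (Fin 3),
      Function.Periodic p T ∧ LipschitzWith 1 p ∧
      (∫ t in (0:ℝ)..T, (1 - Real.sqrt (1 - ‖deriv p t‖ ^ 2))) +
        (∫ t in (0:ℝ)..T, ⟪deriv p t, A t (p t)⟫) < 0 := by
  classical
  obtain ⟨b, t₁, t₂, hncb⟩ := hnc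
  have hAc : Continuous fun q : ℝ × EuclideanSpace ℝ (Fin 3) => A q.1 q.2 := hA.continuous
  have hac : Continuous fun t => A t b := hAc.comp (continuous_id.prodMk continuous_const)
  set c : EuclideanSpace ℝ (Fin 3) := T⁻¹ • ∫ t in (0:ℝ)..T, A t b with hc
  set f : ℝ → EuclideanSpace ℝ (Fin 3) := fun t => A t b - c with hfdef
  have hfc : Continuous f := hac.sub continuous_const
  have hfper : Function.Periodic f T := fun t => by simp [hfdef, hAper]
  have hfint0 : (∫ t in (0:ℝ)..T, f t) = 0 := by
    have h1 : (∫ t in (0:ℝ)..T, f t)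
        = (∫ t in (0:ℝ)..T, A t b) - ∫ _t in (0:ℝ)..T, c := by
      simp only [hfdef]
      exact intervalIntegral.integral_sub (hac.intervalIntegrable _ _) intervalIntegrable_const
    rw [h1, intervalIntegral.integral_const, hc, sub_zero, smul_smul,
      mul_inv_cancel₀ hT.ne', one_smul, sub_self]
  set g : ℝ → EuclideanSpace ℝ (Fin 3) := fun t => ∫ s in (0:ℝ)..t, f s with hgdef
  have hgderiv : ∀ t, HasDerivAt g (f t) t := fun t =>
    intervalIntegral.integral_hasDerivAt_right (hfc.intervalIntegrable (μ := volume) 0 t)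
      (hfc.stronglyMeasurableAtFilter volume (nhds t)) hfc.continuousAt
  have hgcont : Continuous g :=
    continuous_iff_continuousAt.2 fun t => (hgderiv t).continuousAt
  have hgper : Function.Periodic g T := by
    intro t
    have h1 := intervalIntegral.integral_add_adjacent_intervals
      (a := (0:ℝ)) (b := t) (c := t + T)
      (hfc.intervalIntegrable (μ := volume) _ _) (hfc.intervalIntegrable _ _)
    have h2 : (∫ s in t..(t + T), f s) = ∫ s in (0:ℝ)..((0:ℝ) + T), f s :=
      hfper.intervalIntegral_add_eq t 0
    rw [show (0:ℝ) + T = T by ring] at h2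
    simp only [hgdef]
    rw [← h1, h2, hfint0, add_zero]
  -- global bounds for periodic continuous functions
  have hbound : ∀ h : ℝ → EuclideanSpace ℝ (Fin 3), Continuous h → Function.Periodic h T →
      ∃ C : ℝ, 0 ≤ C ∧ ∀ t, ‖h t‖ ≤ C := by
    intro h hhc hhp
    obtain ⟨C, hC⟩ := (isCompact_Icc (a := (0:ℝ)) (b := T)).exists_bound_of_continuousOn
      hhc.continuousOn
    refine ⟨max C 0, le_max_right _ _, fun t => ?_⟩
    obtain ⟨y, hy, hyt⟩ := hhp.exists_mem_Ico₀ hT t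
    rw [hyt]
    exact (hC y (Ico_subset_Icc_self hy)).trans (le_max_left _ _)
  obtain ⟨K, hK0, hKf⟩ := hbound f hfc hfper
  obtain ⟨G, hG0, hGg⟩ := hbound g hgcont hgper
  have hM0 : 0 ≤ M := (norm_nonneg _).trans (hM 0 b)
  -- spatial Lipschitz bound for A
  have hAdx : ∀ (t : ℝ) (x : EuclideanSpace ℝ (Fin 3)), DifferentiableAt ℝ (A t) x := by
    intro t x
    have h1 : DifferentiableAt ℝ ((fun q : ℝ × EuclideanSpace ℝ (Fin 3) => A q.1 q.2) ∘
        fun y : EuclideanSpace ℝ (Fin 3) => (t, y)) x :=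
      (hA.differentiable one_ne_zero _).comp x ((differentiableAt_const t).prodMk differentiableAt_id)
    exact h1
  have hALip : ∀ (t : ℝ) (x y : EuclideanSpace ℝ (Fin 3)),
      ‖A t x - A t y‖ ≤ M * ‖x - y‖ := fun t x y =>
    convex_univ.norm_image_sub_le_of_norm_fderiv_le (fun z _ => hAdx t z) (fun z _ => hM t z)
      (mem_univ y) (mem_univ x)
  -- L² norm of f
  have hfsqc : Continuous fun t => ‖f t‖ ^ 2 := hfc.norm.pow 2
  set L : ℝ := ∫ t in (0:ℝ)..T, ‖f t‖ ^ 2 with hLdef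
  have hLnn : 0 ≤ L :=
    intervalIntegral.integral_nonneg hT.le fun t _ => sq_nonneg _
  have hLpos : 0 < L := by
    rcases hLnn.lt_or_eq with h | h
    · exact h
    exfalso
    have hz : (fun t => ‖f t‖ ^ 2) =ᵐ[volume.restrict (Ioc (0:ℝ) T)] 0 :=
      (intervalIntegral.integral_eq_zero_iff_of_le_of_nonneg_ae hT.le
        (Filter.Eventually.of_forall fun t => sq_nonneg _)
        (hfsqc.intervalIntegrable _ _)).1 h.symm
    have hUopen : IsOpen ({t : ℝ | f t ≠ 0} ∩ Ioo 0 T) :=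
      (isOpen_compl_iff.2 (isClosed_singleton.preimage hfc)).inter isOpen_Ioo
    have h1 : volume.restrict (Ioc (0:ℝ) T) {t : ℝ | ¬ (‖f t‖ ^ 2 = 0)} = 0 := by
      have h := hz
      rw [Filter.EventuallyEq, ae_iff] at h
      simpa using h
    have hsub : ({t : ℝ | f t ≠ 0} ∩ Ioo 0 T) ⊆ {t : ℝ | ¬ (‖f t‖ ^ 2 = 0)} := by
      rintro t ⟨ht, -⟩
      simpa using ht
    have h2 : volume.restrict (Ioc (0:ℝ) T) ({t : ℝ | f t ≠ 0} ∩ Ioo 0 T) = 0 :=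
      measure_mono_null hsub h1
    rw [Measure.restrict_apply hUopen.measurableSet] at h2
    rw [inter_eq_self_of_subset_left (inter_subset_right.trans Ioo_subset_Ioc_self)] at h2
    have hempty := hUopen.eq_empty_of_measure_zero h2
    have hzeroIoo : EqOn f 0 (Ioo (0:ℝ) T) := by
      intro t ht
      by_contra hne
      have : t ∈ ({t : ℝ | f t ≠ 0} ∩ Ioo 0 T) := ⟨hne, ht⟩
      rw [hempty] at this
      exact this
    have hzeroIcc : EqOn f 0 (Icc (0:ℝ) T) := by
      have h3 := hzeroIoo.closure hfc continuous_const
      rwa [closure_Ioo hT.ne] at h3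
    have hfzero : ∀ t, f t = 0 := by
      intro t
      obtain ⟨y, hy, hyt⟩ := hfper.exists_mem_Ico₀ hT t
      rw [hyt]
      exact hzeroIcc (Ico_subset_Icc_self hy)
    have h4 : f t₁ = f t₂ := by rw [hfzero, hfzero]
    simp only [hfdef, sub_left_inj] at h4
    exact hncb h4
  -- choice of ε
  set D : ℝ := L + K * M * G * T + 1 with hDdef
  have hKMGT : 0 ≤ K * M * G * T :=
    mul_nonneg (mul_nonneg (mul_nonneg hK0 hM0) hG0) hT.le
  have hD0 : 0 < D := by rw [hDdef]; linarith
  set ε : ℝ := min (1 / (K + 1)) (L / (2 * D)) with hεdef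
  have hε0 : 0 < ε := lt_min (by positivity) (by positivity)
  have hεK : ε * K ≤ 1 := by
    have h1 : ε ≤ 1 / (K + 1) := min_le_left _ _
    have h2 : (0:ℝ) < K + 1 := by linarith
    calc ε * K ≤ (1 / (K + 1)) * K := mul_le_mul_of_nonneg_right h1 hK0
      _ ≤ 1 := by rw [div_mul_eq_mul_div, div_le_one h2]; linarith
  have hεD : ε * D ≤ L / 2 := by
    have h1 : ε ≤ L / (2 * D) := min_le_right _ _
    calc ε * D ≤ (L / (2 * D)) * D := mul_le_mul_of_nonneg_right h1 hD0.le
      _ = L / 2 := by field_simp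
  -- the path p
  set p : ℝ → EuclideanSpace ℝ (Fin 3) := fun t => b - ε • g t with hpdef
  have hpderiv : ∀ t, HasDerivAt p (-(ε • f t)) t := fun t =>
    ((hgderiv t).const_smul ε).const_sub b
  have hdp : ∀ t, deriv p t = -(ε • f t) := fun t => (hpderiv t).deriv
  have hndp : ∀ t, ‖deriv p t‖ = ε * ‖f t‖ := by
    intro t
    rw [hdp t, norm_neg, norm_smul, Real.norm_eq_abs, abs_of_pos hε0]
  have hpper : Function.Periodic p T := by
    intro t
    simp only [hpdef]
    rw [hgper t]
  have hplip : LipschitzWith 1 p := by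
    refine lipschitzWith_of_nnnorm_deriv_le (fun t => (hpderiv t).differentiableAt) fun t => ?_
    have h : ‖deriv p t‖ ≤ 1 := by
      rw [hndp t]
      exact (mul_le_mul_of_nonneg_left (hKf t) hε0.le).trans hεK
    exact_mod_cast h
  have hpc : Continuous p := continuous_const.sub (hgcont.const_smul ε)
  have hApc : Continuous fun t => A t (p t) := hAc.comp (continuous_id.prodMk hpc)
  -- first integral
  have hin1c : Continuous fun t => 1 - Real.sqrt (1 - (ε * ‖f t‖) ^ 2) :=
    continuous_const.sub (Real.continuous_sqrt.comp
      (continuous_const.sub ((continuous_const.mul hfc.norm).pow 2)))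
  have hI1 : (∫ t in (0:ℝ)..T, (1 - Real.sqrt (1 - ‖deriv p t‖ ^ 2))) ≤ ε ^ 2 * L := by
    have hcong : (∫ t in (0:ℝ)..T, (1 - Real.sqrt (1 - ‖deriv p t‖ ^ 2)))
        = ∫ t in (0:ℝ)..T, (1 - Real.sqrt (1 - (ε * ‖f t‖) ^ 2)) := by
      apply intervalIntegral.integral_congr
      intro t _
      simp only [hndp t]
    have hmono : (∫ t in (0:ℝ)..T, (1 - Real.sqrt (1 - (ε * ‖f t‖) ^ 2)))
        ≤ ∫ t in (0:ℝ)..T, ε ^ 2 * ‖f t‖ ^ 2 := by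
      apply intervalIntegral.integral_mono_on hT.le (hin1c.intervalIntegrable _ _)
        ((continuous_const.mul hfsqc).intervalIntegrable _ _)
      intro t _
      have hs0 : 0 ≤ ε * ‖f t‖ := mul_nonneg hε0.le (norm_nonneg _)
      have hs1 : ε * ‖f t‖ ≤ 1 := (mul_le_mul_of_nonneg_left (hKf t) hε0.le).trans hεK
      have h1 : 0 ≤ 1 - (ε * ‖f t‖) ^ 2 := by nlinarith
      have h2 : Real.sqrt (1 - (ε * ‖f t‖) ^ 2) ^ 2 = 1 - (ε * ‖f t‖) ^ 2 := Real.sq_sqrt h1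
      have h3 : (0:ℝ) ≤ Real.sqrt (1 - (ε * ‖f t‖) ^ 2) := Real.sqrt_nonneg _
      have h4 : Real.sqrt (1 - (ε * ‖f t‖) ^ 2) ≤ 1 := Real.sqrt_le_one.mpr (by nlinarith)
      show 1 - Real.sqrt (1 - (ε * ‖f t‖) ^ 2) ≤ ε ^ 2 * ‖f t‖ ^ 2
      nlinarith
    rw [hcong, hLdef]
    calc (∫ t in (0:ℝ)..T, (1 - Real.sqrt (1 - (ε * ‖f t‖) ^ 2)))
        ≤ ∫ t in (0:ℝ)..T, ε ^ 2 * ‖f t‖ ^ 2 := hmono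
      _ = ε ^ 2 * ∫ t in (0:ℝ)..T, ‖f t‖ ^ 2 := intervalIntegral.integral_const_mul _ _
  -- second integral
  have hinner0 : (∫ t in (0:ℝ)..T, ⟪f t, c⟫) = 0 := by
    have h1 : (∫ t in (0:ℝ)..T, ⟪f t, c⟫) = ∫ t in (0:ℝ)..T, (innerSL ℝ c) (f t) := by
      apply intervalIntegral.integral_congr
      intro t _
      simp only [innerSL_apply_apply]
      exact real_inner_comm _ _
    rw [h1, ContinuousLinearMap.intervalIntegral_comp_comm _ (hfc.intervalIntegrable _ _),
      hfint0, map_zero]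
  have hinnercc : Continuous fun t => ⟪f t, c⟫ := hfc.inner continuous_const
  have hinprod : Continuous fun t => ⟪f t, A t (p t) - A t b⟫ :=
    hfc.inner (hApc.sub hac)
  set R : ℝ := ∫ t in (0:ℝ)..T, ⟪f t, A t (p t) - A t b⟫ with hRdef
  have hI2 : (∫ t in (0:ℝ)..T, ⟪deriv p t, A t (p t)⟫) = -(ε * L) - ε * R := by
    have hcong : (∫ t in (0:ℝ)..T, ⟪deriv p t, A t (p t)⟫)
        = ∫ t in (0:ℝ)..T,
            (-(ε * (‖f t‖ ^ 2 + ⟪f t, c⟫ + ⟪f t, A t (p t) - A t b⟫))) := by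
      apply intervalIntegral.integral_congr
      intro t _
      have hsplit : A t (p t) = f t + c + (A t (p t) - A t b) := by
        simp only [hfdef]
        abel
      simp only [hdp t]
      rw [inner_neg_left, real_inner_smul_left, neg_inj]
      congr 1
      calc ⟪f t, A t (p t)⟫ = ⟪f t, f t + c + (A t (p t) - A t b)⟫ := by rw [← hsplit]
        _ = ‖f t‖ ^ 2 + ⟪f t, c⟫ + ⟪f t, A t (p t) - A t b⟫ := by
            rw [inner_add_right, inner_add_right, real_inner_self_eq_norm_sq]
    rw [hcong, intervalIntegral.integral_neg, intervalIntegral.integral_const_mul,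
      intervalIntegral.integral_add (f := fun t => ‖f t‖ ^ 2 + ⟪f t, c⟫)
          ((hfsqc.add hinnercc).intervalIntegrable _ _)
        (hinprod.intervalIntegrable _ _),
      intervalIntegral.integral_add (hfsqc.intervalIntegrable _ _)
        (hinnercc.intervalIntegrable _ _),
      hinner0, ← hLdef, ← hRdef]
    ring
  -- error bound
  have hRb : |R| ≤ ε * (K * M * G * T) := by
    have hptb : ∀ t, ‖p t - b‖ = ε * ‖g t‖ := by
      intro t
      simp only [hpdef]
      rw [sub_sub_cancel_left, norm_neg, norm_smul, Real.norm_eq_abs, abs_of_pos hε0]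
    have hbd : ∀ t ∈ Set.uIoc (0:ℝ) T, ‖⟪f t, A t (p t) - A t b⟫‖ ≤ K * (M * (ε * G)) := by
      intro t _
      have h1 : ‖⟪f t, A t (p t) - A t b⟫‖ ≤ ‖f t‖ * ‖A t (p t) - A t b‖ :=
        norm_inner_le_norm _ _
      have h2 : ‖A t (p t) - A t b‖ ≤ M * ‖p t - b‖ := hALip t (p t) b
      have h3 : ‖p t - b‖ = ε * ‖g t‖ := hptb t
      calc ‖⟪f t, A t (p t) - A t b⟫‖ ≤ ‖f t‖ * ‖A t (p t) - A t b‖ := h1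
        _ ≤ K * (M * (ε * ‖g t‖)) := by
            have h4 : ‖A t (p t) - A t b‖ ≤ M * (ε * ‖g t‖) := by rw [← h3]; exact h2
            exact mul_le_mul (hKf t) h4 (norm_nonneg _) hK0
        _ ≤ K * (M * (ε * G)) := by
            have h5 : M * (ε * ‖g t‖) ≤ M * (ε * G) :=
              mul_le_mul_of_nonneg_left (mul_le_mul_of_nonneg_left (hGg t) hε0.le) hM0
            exact mul_le_mul_of_nonneg_left h5 hK0
    have h6 := intervalIntegral.norm_integral_le_of_norm_le_const hbd
    rw [← hRdef, Real.norm_eq_abs, sub_zero, abs_of_pos hT] at h6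
    calc |R| ≤ K * (M * (ε * G)) * T := h6
      _ = ε * (K * M * G * T) := by ring
  -- conclusion
  refine ⟨p, hpper, hplip, ?_⟩
  have h5 : -R ≤ |R| := neg_le_abs R
  have h6 : -(ε * R) ≤ ε * (ε * (K * M * G * T)) := by
    calc -(ε * R) = ε * (-R) := by ring
      _ ≤ ε * |R| := mul_le_mul_of_nonneg_left h5 hε0.le
      _ ≤ ε * (ε * (K * M * G * T)) := mul_le_mul_of_nonneg_left hRb hε0.le
  have h7 : ε * (L + K * M * G * T) ≤ L / 2 - ε := by
    have h8 : ε * D = ε * (L + K * M * G * T) + ε := by rw [hDdef]; ring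
    linarith
  have h9 : ε * (ε * (L + K * M * G * T)) ≤ ε * (L / 2 - ε) :=
    mul_le_mul_of_nonneg_left h7 hε0.le
  calc (∫ t in (0:ℝ)..T, (1 - Real.sqrt (1 - ‖deriv p t‖ ^ 2)))
        + (∫ t in (0:ℝ)..T, ⟪deriv p t, A t (p t)⟫)
      ≤ ε ^ 2 * L + (-(ε * L) - ε * R) := add_le_add hI1 (le_of_eq hI2)
    _ = ε ^ 2 * L - ε * L + -(ε * R) := by ring
    _ ≤ ε ^ 2 * L - ε * L + ε * (ε * (K * M * G * T)) := by linarith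
    _ = ε * (ε * (L + K * M * G * T)) - ε * L := by ring
    _ ≤ ε * (L / 2 - ε) - ε * L := by linarith
    _ = -(ε * L) / 2 - ε ^ 2 := by ring
    _ < 0 := by nlinarith
end
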